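/- arXiv:1806.06369 — 8 statements merged into one kernel-verified Lean document; each statement's English description precedes it below -/
import Mathlib

section
/- Let P be a finite nonempty meet-semilattice, let x_1, …, x_n be an enumeration (without repetition) of the maximal elements of P, let A be an additive commutative group, let g : P → A be any function, and for t ∈ P set g̃(t) = ∑_{s ≤ t} g(s). Then ∑_{s ∈ P} g(s) = ∑_{∅ ≠ S ⊆ {1,…,n}} (−1)^{|S|+1} g̃(⋀_{i ∈ S} x_i), where ⋀_{i ∈ S} x_i denotes the meet in P of the elements x_i, i ∈ S. -/
/-- Lemma (inclusion–exclusion over maximal elements of a finite meet-semilattice):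
Let `P` be a finite nonempty meet-semilattice whose maximal elements are exactly
`x 0, …, x (n-1)` (without repetition), `A` an additive commutative group, `g : P → A`,
and `g̃ t = ∑_{s ≤ t} g s`.  Then
`∑_{s ∈ P} g s = ∑_{∅ ≠ S ⊆ {1,…,n}} (−1)^{|S|+1} g̃(⋀_{i ∈ S} x i)`. -/
theorem sum_eq_inclusion_exclusion_meets
    {P : Type*} [Fintype P] [Nonempty P] [SemilatticeInf P]
    {A : Type*} [AddCommGroup A] (g : P → A)
    (n : ℕ) (x : Fin n → P) (hinj : Function.Injective x)
    (hmax : ∀ p : P, IsMax p ↔ ∃ i, x i = p) :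
    (∑ᶠ s : P, g s)
      = ∑ S : Finset (Fin n),
          if h : S.Nonempty then
            ((-1 : ℤ) ^ (S.card + 1)) • (∑ᶠ u ∈ Set.Iic (S.inf' h x), g u)
          else 0 := by
  classical
  -- every element lies below some x i
  have hub : ∀ u : P, ∃ i, u ≤ x i := by
    intro u
    obtain ⟨b, hub, hb⟩ := Finite.exists_le_maximal (p := fun _ : P => True) trivial
    have hbmax : IsMax b := fun y hy => hb.2 trivial hy
    obtain ⟨i, hi⟩ := (hmax b).1 hbmax
    exact ⟨i, hi ▸ hub⟩
  -- key combinatorial fact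
  have key : ∀ u : P,
      (∑ S ∈ Finset.univ.filter
        (fun S : Finset (Fin n) => S.Nonempty ∧ ∀ i ∈ S, u ≤ x i),
        ((-1 : ℤ) ^ (S.card + 1))) = 1 := by
    intro u
    set T := Finset.univ.filter (fun i : Fin n => u ≤ x i) with hT
    have hTne : T ≠ ∅ := by
      obtain ⟨i, hi⟩ := hub u
      exact Finset.ne_empty_of_mem (a := i) (by simp [hT, hi])
    have hfe : Finset.univ.filter
        (fun S : Finset (Fin n) => S.Nonempty ∧ ∀ i ∈ S, u ≤ x i)
        = T.powerset.filter (fun S => S ≠ ∅) := by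
      ext S
      simp [hT, Finset.subset_iff, Finset.nonempty_iff_ne_empty, and_comm]
    rw [hfe, Finset.filter_ne', Finset.sum_erase_eq_sub (Finset.empty_mem_powerset T)]
    have h0 : ∑ S ∈ T.powerset, ((-1 : ℤ) ^ (S.card + 1)) = 0 := by
      have := Finset.sum_powerset_neg_one_pow_card (x := T)
      rw [if_neg hTne] at this
      calc ∑ S ∈ T.powerset, ((-1 : ℤ) ^ (S.card + 1))
          = ∑ S ∈ T.powerset, ((-1 : ℤ) ^ S.card) * (-1) := by
            simp [pow_succ]
        _ = (∑ S ∈ T.powerset, ((-1 : ℤ) ^ S.card)) * (-1) := by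
            rw [Finset.sum_mul]
        _ = 0 := by rw [this]; ring
    rw [h0]; simp
  rw [finsum_eq_sum_of_fintype]
  have hrw : ∀ S : Finset (Fin n),
      (if h : S.Nonempty then
          ((-1 : ℤ) ^ (S.card + 1)) • (∑ᶠ u ∈ Set.Iic (S.inf' h x), g u)
        else 0)
      = ∑ u : P, if S.Nonempty ∧ ∀ i ∈ S, u ≤ x i then
          ((-1 : ℤ) ^ (S.card + 1)) • g u else 0 := by
    intro S
    by_cases h : S.Nonempty
    · rw [dif_pos h]
      have hset : (∑ᶠ u ∈ Set.Iic (S.inf' h x), g u)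
          = ∑ u ∈ Finset.univ.filter (fun u => ∀ i ∈ S, u ≤ x i), g u := by
        rw [← finsum_mem_coe_finset]
        congr 1
        ext u
        simp [Finset.le_inf'_iff]
      rw [hset, Finset.smul_sum, Finset.sum_filter]
      exact Finset.sum_congr rfl fun u _ => by
        by_cases hu : ∀ i ∈ S, u ≤ x i <;> simp [hu, h]
    · rw [dif_neg h]
      simp [h]
  rw [Finset.sum_congr rfl fun S _ => hrw S, Finset.sum_comm]
  refine Finset.sum_congr rfl fun u _ => ?_
  rw [← Finset.sum_filter]
  have : (∑ S ∈ Finset.univ.filter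
      (fun S : Finset (Fin n) => S.Nonempty ∧ ∀ i ∈ S, u ≤ x i),
      ((-1 : ℤ) ^ (S.card + 1)) • g u)
      = (∑ S ∈ Finset.univ.filter
        (fun S : Finset (Fin n) => S.Nonempty ∧ ∀ i ∈ S, u ≤ x i),
        ((-1 : ℤ) ^ (S.card + 1))) • g u := by
    rw [Finset.sum_smul]
  rw [this, key u, one_smul]
end

section
/- Let P be a finite nonempty meet-semilattice, let P̂ = P ∪ {⊤} be the poset obtained by adjoining a new greatest element ⊤, and let x_1, …, x_n be the maximal elements of P. Let P' ⊆ P be a subset that contains all the elements x_1, …, x_n and is closed under the meet operation of P, and let P̂' = P' ∪ {⊤} carry the order induced from P̂. Then for every s ∈ P', μ_{P̂'}(s, ⊤) = μ_{P̂}(s, ⊤), where μ_{P̂'} is the Möbius function of the induced subposet P̂'. -/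
open Finset

private lemma myFinsumIcc {α : Type*} [Fintype α] [PartialOrder α] (f : α → ℤ) (u v : α)
    [inst : DecidablePred fun z : α => u ≤ z ∧ z ≤ v] :
    ∑ᶠ z ∈ Set.Icc u v, f z =
      ∑ z ∈ Finset.univ.filter (fun z : α => u ≤ z ∧ z ≤ v), f z := by
  rw [← finsum_mem_coe_finset]
  congr 1
  ext z
  simp [Set.mem_Icc]

/-- From the "row" defining identity of the Möbius function one gets the "column" identity
(strict version): if `u < v` then `∑_{u ≤ z ≤ v} m z v = 0`. -/
private lemma myMobiusDual {α : Type*} [Fintype α] [PartialOrder α] (m : α → α → ℤ)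
    (hdiag : ∀ u : α, (∑ᶠ z ∈ Set.Icc u u, m u z) = 1)
    (hlt : ∀ u v : α, u < v → (∑ᶠ z ∈ Set.Icc u v, m u z) = 0)
    (u v : α) (huv : u < v) :
    (∑ᶠ z ∈ Set.Icc u v, m z v) = 0 := by
  classical
  set M : Matrix α α ℤ := fun a b => if a ≤ b then m a b else 0 with hM
  set Z : Matrix α α ℤ := fun a b => if a ≤ b then 1 else 0 with hZ
  have key : ∀ a b : α, ∑ z, M a z * Z z b
      = ∑ z ∈ Finset.univ.filter (fun z : α => a ≤ z ∧ z ≤ b), m a z := by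
    intro a b
    rw [Finset.sum_filter]
    apply Finset.sum_congr rfl
    intro z _
    by_cases h1 : a ≤ z <;> by_cases h2 : z ≤ b <;> simp [hM, hZ, h1, h2]
  have hMZ : M * Z = 1 := by
    ext a b
    rw [Matrix.mul_apply, key a b, ← myFinsumIcc, Matrix.one_apply]
    by_cases hab : a ≤ b
    · rcases eq_or_lt_of_le hab with rfl | h
      · rw [hdiag a, if_pos rfl]
      · rw [hlt a b h, if_neg h.ne]
    · have : Set.Icc a b = ∅ := by
        ext z
        simp only [Set.mem_Icc, Set.mem_empty_iff_false, iff_false]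
        rintro ⟨h1, h2⟩
        exact hab (h1.trans h2)
      rw [this, finsum_mem_empty, if_neg (by rintro rfl; exact hab le_rfl)]
  have hZM : Z * M = 1 := mul_eq_one_comm.mp hMZ
  have h2 : ∑ z, Z u z * M z v = 0 := by
    have h3 := congrFun (congrFun hZM u) v
    rw [Matrix.mul_apply] at h3
    rw [h3, Matrix.one_apply, if_neg huv.ne]
  have key2 : ∑ z, Z u z * M z v
      = ∑ z ∈ Finset.univ.filter (fun z : α => u ≤ z ∧ z ≤ v), m z v := by
    rw [Finset.sum_filter]
    apply Finset.sum_congr rfl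
    intro z _
    by_cases h1 : u ≤ z <;> by_cases h2 : z ≤ v <;> simp [hM, hZ, h1, h2]
  rw [myFinsumIcc, ← key2, h2]

/-- `∑_{z ≥ s in α} m(z, ⊤) = -1` in `WithTop α`. -/
private lemma myColumnSum {α : Type*} [Fintype α] [PartialOrder α]
    (m : WithTop α → WithTop α → ℤ)
    (hdiag : ∀ u : WithTop α, (∑ᶠ z ∈ Set.Icc u u, m u z) = 1)
    (hlt : ∀ u v : WithTop α, u < v → (∑ᶠ z ∈ Set.Icc u v, m u z) = 0)
    (s : α) :
    (∑ᶠ z ∈ Set.Ici s, m ↑z ⊤) = -1 := by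
  classical
  haveI : Fintype (WithTop α) := Fintype.ofEquiv (Option α) (Equiv.refl _)
  have htop : m ⊤ ⊤ = 1 := by
    have := hdiag (⊤ : WithTop α)
    rwa [Set.Icc_self, finsum_mem_singleton] at this
  have hd := myMobiusDual m hdiag hlt (↑s) ⊤ (WithTop.coe_lt_top s)
  have hIcc : Set.Icc (↑s : WithTop α) ⊤ = insert ⊤ ((↑) '' Set.Ici s) := by
    ext z
    cases z using WithTop.recTopCoe with
    | top => simp
    | coe w => simp [Set.mem_Icc, Set.mem_Ici]
  rw [hIcc, finsum_mem_insert _ (by simp [Set.mem_image]) ((Set.toFinite _).image _),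
    finsum_mem_image (fun a _ b _ h => WithTop.coe_injective h), htop] at hd
  linarith

set_option maxHeartbeats 1000000 in
/-- Lemma (the Möbius function at the top is unchanged when passing to a meet-closed
subposet containing the maximal elements):
Let `P` be a finite nonempty meet-semilattice with maximal elements `x 0, …, x (n-1)`,
and `P̂ = WithTop P`.  Let `P' ⊆ P` contain all the `x i` and be closed under meets,
and let `P̂' = WithTop P'` carry the induced order.  If `mu` and `mu'` are the Möbius
functions of `P̂` and `P̂'` respectively (each characterized by
`∑_{x ≤ z ≤ y} μ x z = δ_{x,y}`), then `mu' s ⊤ = mu s ⊤` for every `s ∈ P'`. -/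
theorem mobius_top_eq_of_meet_closed_subposet
    {P : Type*} [Fintype P] [Nonempty P] [SemilatticeInf P] [DecidableEq P]
    (n : ℕ) (x : Fin n → P) (hinj : Function.Injective x)
    (hmax : ∀ p : P, IsMax p ↔ ∃ i, x i = p)
    (P' : Set P) (hx : ∀ i, x i ∈ P') (hmeet : ∀ p q : P, p ∈ P' → q ∈ P' → p ⊓ q ∈ P')
    (mu : WithTop P → WithTop P → ℤ)
    (hmu : ∀ u v : WithTop P, u ≤ v →
      (∑ᶠ z ∈ Set.Icc u v, mu u z) = if u = v then (1 : ℤ) else 0)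
    (mu' : WithTop P' → WithTop P' → ℤ)
    (hmu' : ∀ u v : WithTop P', u ≤ v →
      (∑ᶠ z ∈ Set.Icc u v, mu' u z) = if u = v then (1 : ℤ) else 0)
    (s : P) (hs : s ∈ P') :
    mu' (↑(⟨s, hs⟩ : P')) ⊤ = mu (↑s) ⊤ := by
  classical
  haveI : Fintype ↥P' := Fintype.ofFinite _
  -- the function of interest
  set N : P → ℤ := fun z => mu ↑z ⊤ with hN
  have hdiag : ∀ u : WithTop P, (∑ᶠ z ∈ Set.Icc u u, mu u z) = 1 := by
    intro u
    have := hmu u u le_rfl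
    rwa [if_pos rfl] at this
  have hlt : ∀ u v : WithTop P, u < v → (∑ᶠ z ∈ Set.Icc u v, mu u z) = 0 := by
    intro u v h
    have := hmu u v h.le
    rwa [if_neg h.ne] at this
  have hdiag' : ∀ u : WithTop ↥P', (∑ᶠ z ∈ Set.Icc u u, mu' u z) = 1 := by
    intro u
    have := hmu' u u le_rfl
    rwa [if_pos rfl] at this
  have hlt' : ∀ u v : WithTop ↥P', u < v → (∑ᶠ z ∈ Set.Icc u v, mu' u z) = 0 := by
    intro u v h
    have := hmu' u v h.le
    rwa [if_neg h.ne] at this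
  -- convert finsums over `Set.Ici` into finset sums
  have conv : ∀ (g : P → ℤ) (t : P),
      (∑ᶠ z ∈ Set.Ici t, g z) = ∑ z ∈ Finset.univ.filter (fun z : P => t ≤ z), g z := by
    intro g t
    rw [← finsum_mem_coe_finset]
    congr 1
    ext z
    simp [Set.mem_Ici]
  have conv' : ∀ (g : ↥P' → ℤ) (t : ↥P'),
      (∑ᶠ z ∈ Set.Ici t, g z) = ∑ z ∈ Finset.univ.filter (fun z : ↥P' => t ≤ z), g z := by
    intro g t
    rw [← finsum_mem_coe_finset]
    congr 1
    ext z
    simp [Set.mem_Ici]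
  have S1 : ∀ t : P, ∑ z ∈ Finset.univ.filter (fun z : P => t ≤ z), N z = -1 := by
    intro t
    rw [← conv]
    exact myColumnSum mu hdiag hlt t
  have S1' : ∀ t : ↥P', ∑ z ∈ Finset.univ.filter (fun z : ↥P' => t ≤ z), mu' ↑z ⊤ = -1 := by
    intro t
    rw [← conv']
    exact myColumnSum mu' hdiag' hlt' t
  -- index sets of maximal elements above a point
  set I : P → Finset (Fin n) := fun z => Finset.univ.filter (fun i => z ≤ x i) with hI
  have hIne : ∀ z : P, (I z).Nonempty := by
    intro z
    obtain ⟨b, hzb, hb⟩ := Finite.exists_le_maximal (a := z) (p := fun _ : P => True) trivial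
    have hbmax : IsMax b := fun c hc => hb.2 trivial hc
    obtain ⟨i, hi⟩ := (hmax b).mp hbmax
    exact ⟨i, by simp [hI, hi, hzb]⟩
  set F : P → P := fun z => (I z).inf' (hIne z) x with hF
  have hFle : ∀ z : P, z ≤ F z := by
    intro z
    apply Finset.le_inf'
    intro i hi
    exact (Finset.mem_filter.mp hi).2
  have hFle_x : ∀ z : P, ∀ i : Fin n, z ≤ x i → F z ≤ x i := by
    intro z i hi
    exact Finset.inf'_le x (by simp [hI, hi])
  have hFmono : ∀ z w : P, z ≤ w → F z ≤ F w := by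
    intro z w hzw
    apply Finset.le_inf'
    intro i hi
    exact hFle_x z i (hzw.trans (Finset.mem_filter.mp hi).2)
  have hFmem : ∀ z : P, F z ∈ P' := by
    intro z
    exact Finset.inf'_mem P' (fun a ha b hb => hmeet a b ha hb) (I z) (hIne z) x
      (fun i _ => hx i)
  -- splitting a "≥ t" sum into the term at t and the "> t" part
  have hsplit : ∀ (t : P) (g : P → ℤ),
      ∑ z ∈ Finset.univ.filter (fun z : P => t ≤ z), g z
        = g t + ∑ z ∈ Finset.univ.filter (fun z : P => t < z), g z := by
    intro t g
    have he : Finset.univ.filter (fun z : P => t ≤ z)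
        = insert t (Finset.univ.filter (fun z : P => t < z)) := by
      ext w
      simp only [mem_filter, mem_univ, true_and, Finset.mem_insert]
      constructor
      · intro h
        rcases eq_or_lt_of_le h with h | h
        · exact Or.inl h.symm
        · exact Or.inr h
      · rintro (rfl | h)
        · exact le_rfl
        · exact h.le
    rw [he, Finset.sum_insert (by simp)]
  -- key vanishing lemma: μ(z,⊤) = 0 for non-closed z
  have key : ∀ z : P, F z ≠ z → N z = 0 := by
    have wf : WellFounded ((· > ·) : P → P → Prop) := wellFounded_gt
    intro z
    induction z using wf.induction with
    | _ z ih =>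
      intro hz
      have hzF : z < F z := lt_of_le_of_ne (hFle z) (Ne.symm hz)
      have e1 : ∑ w ∈ Finset.univ.filter (fun w : P => z < w), N w
          = ∑ w ∈ (Finset.univ.filter (fun w : P => z < w)).filter (fun w => F w = w), N w := by
        refine (Finset.sum_filter_of_ne ?_).symm
        intro w hw hNw
        by_contra hc
        exact hNw (ih w (Finset.mem_filter.mp hw).2 hc)
      have e2 : (Finset.univ.filter (fun w : P => z < w)).filter (fun w => F w = w)
          = (Finset.univ.filter (fun w : P => F z ≤ w)).filter (fun w => F w = w) := by
        ext w
        simp only [Finset.filter_filter, mem_filter, mem_univ, true_and]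
        constructor
        · rintro ⟨hzw, hFw⟩
          exact ⟨hFw ▸ hFmono z w hzw.le, hFw⟩
        · rintro ⟨hFzw, hFw⟩
          exact ⟨hzF.trans_le hFzw, hFw⟩
      have e3 : ∑ w ∈ (Finset.univ.filter (fun w : P => F z ≤ w)).filter (fun w => F w = w), N w
          = ∑ w ∈ Finset.univ.filter (fun w : P => F z ≤ w), N w := by
        apply Finset.sum_filter_of_ne
        intro w hw hNw
        by_contra hc
        have hzw : z < w := hzF.trans_le (Finset.mem_filter.mp hw).2
        exact hNw (ih w hzw hc)
      have h1 := S1 z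
      rw [hsplit z N, e1, e2, e3, S1 (F z)] at h1
      linarith
  -- the claim: summing N over P' above an element of P' still gives -1
  have claim : ∀ t : ↥P',
      ∑ z ∈ Finset.univ.filter (fun z : ↥P' => t ≤ z), N ↑z = -1 := by
    intro t
    have h1 := S1 ↑t
    have e1 : ∑ z ∈ Finset.univ.filter (fun z : P => ↑t ≤ z), N z
        = ∑ z ∈ (Finset.univ.filter (fun z : P => ↑t ≤ z)).filter (fun z => z ∈ P'), N z := by
      refine (Finset.sum_filter_of_ne ?_).symm
      intro z _ hNz
      by_contra hc
      refine hNz (key z ?_)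
      intro hFz
      exact hc (hFz ▸ hFmem z)
    have e2 : ∑ z ∈ (Finset.univ.filter (fun z : P => ↑t ≤ z)).filter (fun z => z ∈ P'), N z
        = ∑ z ∈ Finset.univ.filter (fun z : ↥P' => t ≤ z), N ↑z := by
      refine Finset.sum_bij' (fun z hz => (⟨z, (Finset.mem_filter.mp hz).2⟩ : ↥P'))
        (fun z _ => (z : P)) ?_ ?_ ?_ ?_ ?_
      · intro z hz
        simp only [mem_filter, mem_univ, true_and, Subtype.mk_le_mk, Subtype.coe_le_coe] at hz ⊢
        exact hz.1
      · intro z hz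
        simp only [mem_filter, mem_univ, true_and] at hz ⊢
        exact ⟨hz, z.2⟩
      · intro z hz
        rfl
      · intro z hz
        rfl
      · intro z hz
        rfl
    rw [e1, e2] at h1
    exact h1
  -- splitting for the subtype
  have hsplit' : ∀ (t : ↥P') (g : ↥P' → ℤ),
      ∑ z ∈ Finset.univ.filter (fun z : ↥P' => t ≤ z), g z
        = g t + ∑ z ∈ Finset.univ.filter (fun z : ↥P' => t < z), g z := by
    intro t g
    have he : Finset.univ.filter (fun z : ↥P' => t ≤ z)
        = insert t (Finset.univ.filter (fun z : ↥P' => t < z)) := by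
      ext w
      simp only [mem_filter, mem_univ, true_and, Finset.mem_insert]
      constructor
      · intro h
        rcases eq_or_lt_of_le h with h | h
        · exact Or.inl h.symm
        · exact Or.inr h
      · rintro (rfl | h)
        · exact le_rfl
        · exact h.le
    rw [he, Finset.sum_insert (by simp)]
  -- final uniqueness argument, by downward induction on P'
  have final : ∀ t : ↥P', mu' ↑t ⊤ = N ↑t := by
    have wf : WellFounded ((· > ·) : ↥P' → ↥P' → Prop) := wellFounded_gt
    intro t
    induction t using wf.induction with
    | _ t ih =>
      have h1 := S1' t
      have h2 := claim t
      rw [hsplit' t (fun z => mu' ↑z ⊤)] at h1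
      rw [hsplit' t (fun z => N ↑z)] at h2
      have h3 : ∑ z ∈ Finset.univ.filter (fun z : ↥P' => t < z), mu' ↑z ⊤
          = ∑ z ∈ Finset.univ.filter (fun z : ↥P' => t < z), N ↑z := by
        apply Finset.sum_congr rfl
        intro z hz
        exact ih z (Finset.mem_filter.mp hz).2
      rw [h3] at h1
      linarith
  exact final ⟨s, hs⟩
end

section
/- Let λ ⊆ μ be partitions such that μ/λ is a horizontal strip, and let a be a positive integer with a ≤ |μ/λ|. Then ∑_{ν} (−1)^{|ν/λ|−a} · C(r(ν/λ)−1, |ν/λ|−a) = 1, where the sum ranges over all partitions ν with λ ⊆ ν ⊆ μ such that ν/λ is a horizontal strip and a ≤ |ν/λ|, and C(m,k) denotes the ordinary binomial coefficient (note r(ν/λ) ≥ 1 for each such ν, so r(ν/λ)−1 ∈ ℕ). -/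
/-- A partition: an antitone, eventually-zero function `ℕ → ℕ`
(row `i+1` of the usual 1-indexed partition is `f i`). -/
def IsPartition (f : ℕ → ℕ) : Prop :=
  (∀ i, f (i + 1) ≤ f i) ∧ ∃ N, ∀ i, N ≤ i → f i = 0

/-- `u/l` is a horizontal strip: `l ⊆ u` and `u (i+1) ≤ l i` for all rows. -/
def IsHStrip (l u : ℕ → ℕ) : Prop :=
  (∀ i, l i ≤ u i) ∧ ∀ i, u (i + 1) ≤ l i

/-- The size `|u/l| = ∑_i (u i − l i)` of a skew shape. -/
noncomputable def stripSize (l u : ℕ → ℕ) : ℕ := ∑ᶠ i, (u i - l i)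

/-- The number of rows `r(u/l) = #{i : l i < u i}` of a skew shape. -/
noncomputable def stripRows (l u : ℕ → ℕ) : ℕ := {i | l i < u i}.ncard

/-!
Writing `ν = λ + c`, the shapes `ν` in the sum correspond to the finitely supported `c ≤ m := μ - λ`,
with `|ν/λ| = |c|` (the degree of `c`) and `r(ν/λ) = r(c) := #(supp c)`. For `c ≠ 0` the summand
is the coefficient of `X ^ a` in `Q c := X ^ (|c| - r(c) + 1) * (X - 1) ^ (r(c) - 1)`, and
`(X - 1) * Q c = X * ∏_{i ∈ supp c} w (c i)` with the row weights `w 0 = 1`,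
`w (t + 1) = X ^ t * (X - 1)`. These telescope, `∑_{t ≤ b} w t = X ^ b`, so
`∑_{c ≤ m} ∏_i w (c i) = X ^ |m|` and hence `∑_{0 ≠ c ≤ m} Q c = X + X ^ 2 + ⋯ + X ^ |m|`,
whose coefficient of `X ^ a` is `1` for `1 ≤ a ≤ |m|`.
-/

open Finset Polynomial

theorem Polynomial.coeff_X_pow_mul_X_sub_one_pow {R : Type*} [CommRing R] (e n k : ℕ) :
    ((X : R[X]) ^ e * (X - 1) ^ n).coeff k =
      if k ≤ e + n then (-1) ^ (e + n - k) * ((n.choose (e + n - k) : ℕ) : R) else 0 := by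
  rw [coeff_X_pow_mul', sub_eq_add_neg, ← C_1, ← C_neg, coeff_X_add_C_pow]
  by_cases hek : e ≤ k
  · by_cases hkn : k ≤ e + n
    · rw [if_pos hek, if_pos hkn, show e + n - k = n - (k - e) by omega, Nat.choose_symm (by omega)]
    · rw [if_pos hek, if_neg hkn, Nat.choose_eq_zero_of_lt (by omega), Nat.cast_zero, mul_zero]
  · rw [if_neg hek, if_pos (by omega), Nat.choose_eq_zero_of_lt (by omega), Nat.cast_zero, mul_zero]

namespace Finsupp

variable {ι : Type*}

theorem card_support_le_degree (c : ι →₀ ℕ) : #c.support ≤ c.degree := by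
  rw [card_eq_sum_ones, degree_apply]
  exact Finset.sum_le_sum fun i hi => Nat.one_le_iff_ne_zero.mpr (mem_support_iff.mp hi)

theorem sum_Iic_prod {R : Type*} [CommSemiring R] [DecidableEq ι] (m : ι →₀ ℕ) (w : ℕ → R)
    (hw : w 0 = 1) :
    ∑ c ∈ Iic m, c.prod (fun _ t => w t) = m.prod (fun _ b => ∑ t ∈ Iic b, w t) := by
  rw [Finsupp.prod, Finset.prod_sum]
  symm
  refine Finset.sum_nbij' (fun p => indicator m.support p) (fun c i _ => c i) ?_ ?_ ?_ ?_ ?_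
  · intro p hp
    simp only [Finset.mem_pi, mem_Iic] at hp ⊢
    intro i
    by_cases hi : i ∈ m.support
    · simpa [indicator_of_mem hi] using hp i hi
    · simp [indicator_of_notMem hi]
  · intro c hc
    simp only [Finset.mem_pi, mem_Iic] at hc ⊢
    exact fun i _ => hc i
  · intro p _
    ext i hi
    simp [indicator_of_mem hi]
  · intro c hc
    simp only [mem_Iic] at hc
    ext i
    by_cases hi : i ∈ m.support
    · simp [indicator_of_mem hi]
    · have : c i = 0 := Nat.eq_zero_of_le_zero ((hc i).trans (notMem_support_iff.mp hi).le)
      simp [indicator_of_notMem hi, this]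
  · intro p _
    rw [prod_indicator_index_eq_prod_attach _ (fun _ _ => hw)]

end Finsupp

section RowWeight

variable {ι R : Type*} [CommRing R]

def rowWeight (x : R) : ℕ → R
  | 0 => 1
  | t + 1 => x ^ t * (x - 1)

theorem sum_Iic_rowWeight (x : R) (b : ℕ) : ∑ t ∈ Iic b, rowWeight x t = x ^ b := by
  rw [← Nat.range_succ_eq_Iic]
  induction b with
  | zero => simp [rowWeight]
  | succ b ih => rw [sum_range_succ, ih, rowWeight]; ring

theorem sum_Iic_prod_rowWeight [DecidableEq ι] (m : ι →₀ ℕ) (x : R) :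
    ∑ c ∈ Iic m, c.prod (fun _ t => rowWeight x t) = x ^ m.degree := by
  rw [Finsupp.sum_Iic_prod m (rowWeight x) rfl]
  simp only [sum_Iic_rowWeight, Finsupp.prod, prod_pow_eq_pow_sum, Finsupp.degree_apply]

theorem prod_rowWeight (c : ι →₀ ℕ) (x : R) :
    c.prod (fun _ t => rowWeight x t) = x ^ (c.degree - #c.support) * (x - 1) ^ #c.support := by
  have hw : ∀ i ∈ c.support, rowWeight x (c i) = x ^ (c i - 1) * (x - 1) := by
    intro i hi
    obtain ⟨t, ht⟩ := Nat.exists_eq_add_one_of_ne_zero (Finsupp.mem_support_iff.mp hi)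
    rw [ht, rowWeight, Nat.add_sub_cancel]
  rw [Finsupp.prod, prod_congr rfl hw, prod_mul_distrib, prod_pow_eq_pow_sum, prod_const,
    Finsupp.degree_apply, card_eq_sum_ones, ← sum_tsub_distrib]
  exact fun i hi => Nat.one_le_iff_ne_zero.mpr (Finsupp.mem_support_iff.mp hi)

end RowWeight

section MobiusPoly

variable {ι : Type*}

noncomputable def mobiusPoly (c : ι →₀ ℕ) : ℤ[X] :=
  X ^ (c.degree - #c.support + 1) * (X - 1) ^ (#c.support - 1)

theorem X_sub_one_mul_mobiusPoly {c : ι →₀ ℕ} (hc : c ≠ 0) :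
    (X - 1) * mobiusPoly c = X * c.prod (fun _ t => rowWeight X t) := by
  obtain ⟨r, hr⟩ :=
    Nat.exists_eq_add_one_of_ne_zero (Finsupp.support_nonempty_iff.mpr hc).card_ne_zero
  rw [prod_rowWeight, mobiusPoly, hr, Nat.add_sub_cancel]
  ring

theorem coeff_mobiusPoly {c : ι →₀ ℕ} (hc : c ≠ 0) (a : ℕ) :
    (mobiusPoly c).coeff a =
      if a ≤ c.degree then (-1) ^ (c.degree - a) * ((#c.support - 1).choose (c.degree - a) : ℤ)
      else 0 := by
  have hr := (Finsupp.support_nonempty_iff.mpr hc).card_pos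
  have hrd := Finsupp.card_support_le_degree c
  rw [mobiusPoly, coeff_X_pow_mul_X_sub_one_pow, show c.degree - #c.support + 1 + (#c.support - 1)
    = c.degree by omega]

variable [DecidableEq ι]

theorem sum_Iic_erase_zero_mobiusPoly (m : ι →₀ ℕ) :
    ∑ c ∈ (Iic m).erase 0, mobiusPoly c = ∑ t ∈ range m.degree, X ^ (t + 1) := by
  refine mul_left_cancel₀ (X_sub_C_ne_zero (1 : ℤ)) ?_
  rw [C_1, mul_sum, sum_congr rfl fun c hc => X_sub_one_mul_mobiusPoly (ne_of_mem_erase hc),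
    ← mul_sum, sum_erase_eq_sub (mem_Iic.mpr zero_le), sum_Iic_prod_rowWeight,
    Finsupp.prod_zero_index]
  simp_rw [pow_succ, ← sum_mul]
  rw [mul_comm _ X, ← mul_assoc, mul_comm _ X, mul_assoc, mul_geom_sum]

theorem sum_Iic_filter_neg_one_pow_mul_choose (m : ι →₀ ℕ) {a : ℕ} (ha : 0 < a)
    (haM : a ≤ m.degree) :
    ∑ c ∈ Iic m with a ≤ c.degree,
      (-1 : ℤ) ^ (c.degree - a) * ((#c.support - 1).choose (c.degree - a) : ℤ) = 1 := by
  obtain ⟨k, rfl⟩ := Nat.exists_eq_add_one_of_ne_zero ha.ne'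
  calc _ = ∑ c ∈ (Iic m).erase 0, (mobiusPoly c).coeff (k + 1) := by
        rw [sum_filter, ← sum_erase_add _ _ (mem_Iic.mpr zero_le), if_neg (by simp),
          add_zero]
        exact sum_congr rfl fun c hc => (coeff_mobiusPoly (ne_of_mem_erase hc) _).symm
    _ = 1 := by
        rw [← finsetSum_coeff, sum_Iic_erase_zero_mobiusPoly, finsetSum_coeff]
        simp_rw [coeff_X_pow, add_left_inj]
        rw [sum_ite_eq, if_pos (mem_range.mpr haM)]

end MobiusPoly

theorem Finsupp.exists_add_coe_eq {ι : Type*} {l u : ι → ℕ} (hle : l ≤ u)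
    (hu : (Function.support u).Finite) : ∃ c : ι →₀ ℕ, l + ⇑c = u :=
  ⟨Finsupp.ofSupportFinite (u - l) (hu.subset fun i hi h => hi (by simp [h])),
    by ext i; simp [Finsupp.ofSupportFinite_coe, hle i]⟩

theorem IsPartition.support_finite {f : ℕ → ℕ} (hf : IsPartition f) :
    (Function.support f).Finite :=
  let ⟨N, hN⟩ := hf.2
  (Set.finite_Iio N).subset fun i hi => Set.mem_Iio.mpr (not_le.mp fun h => hi (hN i h))

theorem IsHStrip.of_le {l u v : ℕ → ℕ} (h : IsHStrip l u) (hlv : l ≤ v) (hvu : v ≤ u) :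
    IsHStrip l v :=
  ⟨hlv, fun i => (hvu _).trans (h.2 i)⟩

theorem IsPartition.of_isHStrip_of_le {l u v : ℕ → ℕ} (hu : IsPartition u) (hs : IsHStrip l v)
    (hvu : v ≤ u) : IsPartition v := by
  obtain ⟨N, hN⟩ := hu.2
  exact ⟨fun i => (hs.2 i).trans (hs.1 i), N, fun i hi => Nat.eq_zero_of_le_zero (hN i hi ▸ hvu i)⟩

theorem stripSize_add_coe (l : ℕ → ℕ) (c : ℕ →₀ ℕ) : stripSize l (l + ⇑c) = c.degree := by
  simp only [stripSize, Pi.add_apply, add_tsub_cancel_left]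
  exact finsum_eq_sum_of_support_subset _ (by simp)

theorem stripRows_add_coe (l : ℕ → ℕ) (c : ℕ →₀ ℕ) : stripRows l (l + ⇑c) = #c.support := by
  simp only [stripRows, Pi.add_apply, lt_add_iff_pos_right, Nat.pos_iff_ne_zero]
  exact Set.ncard_coe_finset c.support ▸ congrArg Set.ncard (by ext; simp)

theorem setOf_isHStrip_eq_image {lam mu : ℕ → ℕ} {m : ℕ →₀ ℕ} (hmu : IsPartition mu)
    (hstrip : IsHStrip lam mu) (hm : lam + ⇑m = mu) (a : ℕ) :
    {nu : ℕ → ℕ | IsPartition nu ∧ (∀ i, nu i ≤ mu i) ∧ IsHStrip lam nu ∧ a ≤ stripSize lam nu}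
      = (fun c : ℕ →₀ ℕ => lam + ⇑c) '' ↑{c ∈ Iic m | a ≤ c.degree} := by
  ext nu
  simp only [Set.mem_ofPred_eq, coe_filter, mem_Iic, Set.mem_image]
  constructor
  · rintro ⟨hnu, hle, hs, ha⟩
    obtain ⟨c, rfl⟩ := Finsupp.exists_add_coe_eq hs.1 hnu.support_finite
    refine ⟨c, ⟨fun i => ?_, stripSize_add_coe lam c ▸ ha⟩, rfl⟩
    have := hle i
    simp only [← hm, Pi.add_apply] at this
    omega
  · rintro ⟨c, ⟨hcm, ha⟩, rfl⟩
    have hle : lam + ⇑c ≤ mu := hm ▸ add_le_add_right (Finsupp.coe_mono hcm) lam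
    have hs : IsHStrip lam (lam + ⇑c) := hstrip.of_le le_self_add hle
    exact ⟨hmu.of_isHStrip_of_le hs hle, hle, hs, (stripSize_add_coe lam c).symm ▸ ha⟩

theorem hstrip_mobius_sum_ge_general
    (lam mu : ℕ → ℕ) (hmu : IsPartition mu)
    (hstrip : IsHStrip lam mu) (a : ℕ) (ha : 0 < a) (haM : a ≤ stripSize lam mu) :
    (∑ᶠ nu ∈ {nu : ℕ → ℕ | IsPartition nu ∧ (∀ i, nu i ≤ mu i) ∧
        IsHStrip lam nu ∧ a ≤ stripSize lam nu},
      (-1 : ℤ) ^ (stripSize lam nu - a) *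
        ((stripRows lam nu - 1).choose (stripSize lam nu - a) : ℤ)) = 1 := by
  obtain ⟨m, hm⟩ := Finsupp.exists_add_coe_eq hstrip.1 hmu.support_finite
  have hinj : Function.Injective fun c : ℕ →₀ ℕ => lam + ⇑c :=
    (add_right_injective lam).comp DFunLike.coe_injective
  rw [setOf_isHStrip_eq_image hmu hstrip hm, finsum_mem_image hinj.injOn, finsum_mem_coe_finset]
  simp only [stripSize_add_coe, stripRows_add_coe]
  rw [← hm, stripSize_add_coe] at haM
  exact sum_Iic_filter_neg_one_pow_mul_choose m ha haM

/-- Lemma 3 (1), rephrased: for a horizontal strip `μ/λ` and `0 < a ≤ |μ/λ|`,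
`∑_ν (−1)^{|ν/λ|−a} C(r(ν/λ)−1, |ν/λ|−a) = 1`, the sum being over all partitions
`ν` with `λ ⊆ ν ⊆ μ`, `ν/λ` a horizontal strip and `a ≤ |ν/λ|`. -/
theorem hstrip_mobius_sum_ge
    (lam mu : ℕ → ℕ) (hlam : IsPartition lam) (hmu : IsPartition mu)
    (hstrip : IsHStrip lam mu) (a : ℕ) (ha : 0 < a) (haM : a ≤ stripSize lam mu) :
    (∑ᶠ nu ∈ {nu : ℕ → ℕ | IsPartition nu ∧ (∀ i, nu i ≤ mu i) ∧
        IsHStrip lam nu ∧ a ≤ stripSize lam nu},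
      (-1 : ℤ) ^ (stripSize lam nu - a) *
        ((stripRows lam nu - 1).choose (stripSize lam nu - a) : ℤ)) = 1 :=
  hstrip_mobius_sum_ge_general lam mu hmu hstrip a ha haM
end

section
/- Let λ ⊆ μ be partitions such that μ/λ is a horizontal strip, and let a be a positive integer with |μ/λ| ≤ a. Then ∑_{ν} (−1)^{a−|ν/λ|} · C(r(λ/ν̄), a−|ν/λ|) = 1, where the sum ranges over all partitions ν with μ ⊆ ν such that ν/λ is a horizontal strip and |ν/λ| ≤ a (a finite set), C(m,k) denotes the ordinary binomial coefficient, and r(λ/ν̄) = #{i ≥ 1 : ν (i+1) < λ i} with ν̄ = (ν_2, ν_3, …). -/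
/-- `r(λ/ν̄) = #{i : ν (i+1) < λ i}`, where `ν̄ = (ν_2, ν_3, …)`. -/
noncomputable def stripRowsBar (l v : ℕ → ℕ) : ℕ := {i | v (i + 1) < l i}.ncard

/-!
Write `ν = μ + c` with `c` supported on rows `0, …, n`, where `μ` vanishes from row `n` on.
Then `ν/λ` is a horizontal strip iff `c (j + 1) ≤ λ j - μ (j + 1)` for `j < n`,
`|ν/λ| = |μ/λ| + ∑ c`, and `r(λ/ν̄)` counts the rows `j + 1` where this bound is strict.
With `A = a - |μ/λ|`, the sum is therefore the coefficient of `X ^ A` in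
`∑_c X ^ (∑ c) * (1 - X) ^ r(c)`, which factors over the rows: row `0` contributes
`1 + X + ⋯ + X ^ A`, and a row with bound `t` contributes `∑_{b < t} X ^ b (1 - X) + X ^ t = 1`.
-/

open Polynomial Finset

theorem coeff_one_sub_X_pow {R : Type*} [CommRing R] (r k : ℕ) :
    ((1 - X : R[X]) ^ r).coeff k = (-1) ^ k * r.choose k := by
  induction r generalizing k with
  | zero => rcases k with _ | k <;> simp [coeff_one]
  | succ r ih =>
    rcases k with _ | k
    · simp [pow_succ, mul_sub, ih]
    · simp only [pow_succ, mul_sub, mul_one, coeff_sub, coeff_mul_X, ih, Nat.choose_succ_succ']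
      push_cast
      ring

theorem sum_range_succ_pow_mul_one_sub_pow_ite {R : Type*} [CommRing R] (x : R) (t : ℕ) :
    ∑ b ∈ range (t + 1), x ^ b * (1 - x) ^ (if b < t then 1 else 0) = 1 := by
  rw [sum_range_succ, if_neg (lt_irrefl t), pow_zero, mul_one,
    sum_congr rfl fun b hb => by rw [if_pos (mem_range.mp hb), pow_one], ← sum_mul,
    geom_sum_mul_neg, sub_add_cancel]

def rowRanges {n : ℕ} (A : ℕ) (t : Fin n → ℕ) : Fin (n + 1) → Finset ℕ :=
  Fin.cons (range (A + 1)) fun j => range (t j + 1)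

theorem mem_piFinset_rowRanges {n A : ℕ} {t : Fin n → ℕ} {c : Fin (n + 1) → ℕ} :
    c ∈ Fintype.piFinset (rowRanges A t) ↔ c 0 ≤ A ∧ ∀ j, c j.succ ≤ t j := by
  simp [Fintype.mem_piFinset, Fin.forall_fin_succ, rowRanges]

theorem sum_piFinset_rowRanges_pow_mul_one_sub_pow {R : Type*} [CommRing R] (x : R) {n : ℕ}
    (A : ℕ) (t : Fin n → ℕ) :
    ∑ c ∈ Fintype.piFinset (rowRanges A t), x ^ (∑ i, c i) * (1 - x) ^ #{j | c j.succ < t j} =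
      ∑ b ∈ range (A + 1), x ^ b := by
  let f : (i : Fin (n + 1)) → ℕ → R :=
    Fin.cons (fun b => x ^ b) fun j b => x ^ b * (1 - x) ^ (if b < t j then 1 else 0)
  have hprod (c : Fin (n + 1) → ℕ) :
      ∏ i, f i (c i) = x ^ (∑ i, c i) * (1 - x) ^ #{j | c j.succ < t j} := by
    simp only [Fin.prod_univ_succ, Fin.sum_univ_succ, f, Fin.cons_zero, Fin.cons_succ,
      prod_mul_distrib, prod_pow_eq_pow_sum, sum_boole, Nat.cast_id, pow_add]
    ring
  simp_rw [← hprod, ← prod_univ_sum, Fin.prod_univ_succ, rowRanges, f, Fin.cons_zero,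
    Fin.cons_succ, sum_range_succ_pow_mul_one_sub_pow_ite, prod_const_one, mul_one]

def boundedIncrements {n : ℕ} (A : ℕ) (t : Fin n → ℕ) : Finset (Fin (n + 1) → ℕ) :=
  {c ∈ Fintype.piFinset (rowRanges A t) | ∑ i, c i ≤ A}

theorem mem_boundedIncrements {n A : ℕ} {t : Fin n → ℕ} {c : Fin (n + 1) → ℕ} :
    c ∈ boundedIncrements A t ↔ (∀ j, c j.succ ≤ t j) ∧ ∑ i, c i ≤ A := by
  have : c 0 ≤ ∑ i, c i := single_le_sum (fun i _ => Nat.zero_le (c i)) (mem_univ 0)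
  rw [boundedIncrements, mem_filter, mem_piFinset_rowRanges]
  exact ⟨fun ⟨⟨_, h⟩, hs⟩ => ⟨h, hs⟩, fun ⟨h, hs⟩ => ⟨⟨this.trans hs, h⟩, hs⟩⟩

theorem sum_neg_one_pow_mul_choose_eq_one {n : ℕ} (A : ℕ) (t : Fin n → ℕ) :
    ∑ c ∈ boundedIncrements A t,
      (-1 : ℤ) ^ (A - ∑ i, c i) * ((#{j | c j.succ < t j}).choose (A - ∑ i, c i) : ℤ) = 1 := by
  have h := congrArg (fun p : ℤ[X] => p.coeff A)
    (sum_piFinset_rowRanges_pow_mul_one_sub_pow (X : ℤ[X]) A t)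
  simp only [finsetSum_coeff, coeff_X_pow_mul', coeff_one_sub_X_pow, coeff_X_pow,
    sum_ite_eq, mem_range, Nat.lt_succ_self, if_true] at h
  rwa [boundedIncrements, sum_filter]

section ZeroExtend

variable {m : ℕ}

def zeroExtend (c : Fin m → ℕ) (i : ℕ) : ℕ := if h : i < m then c ⟨i, h⟩ else 0

@[simp]
theorem zeroExtend_val (c : Fin m → ℕ) (i : Fin m) : zeroExtend c i = c i := by
  simp [zeroExtend]

@[simp]
theorem zeroExtend_succ (c : Fin (m + 1) → ℕ) (j : Fin m) :
    zeroExtend c (j + 1) = c j.succ :=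
  zeroExtend_val c j.succ

theorem zeroExtend_of_le (c : Fin m → ℕ) {i : ℕ} (hi : m ≤ i) : zeroExtend c i = 0 := by
  simp [zeroExtend, Nat.not_lt.mpr hi]

theorem zeroExtend_injective : Function.Injective (zeroExtend : (Fin m → ℕ) → ℕ → ℕ) :=
  fun c c' h => funext fun i => by simpa using congrFun h i

theorem finsum_zeroExtend (c : Fin m → ℕ) : ∑ᶠ i, zeroExtend c i = ∑ i, c i := by
  rw [finsum_eq_sum_of_support_subset (s := range m), Finset.sum_range]
  · simp
  · intro i hi
    by_contra h
    exact hi (zeroExtend_of_le c (by simpa using h))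

end ZeroExtend

theorem stripSize_add {l u d : ℕ → ℕ} (hlu : ∀ i, l i ≤ u i)
    (hu : (Function.support fun i => u i - l i).Finite) (hd : d.support.Finite) :
    stripSize l (u + d) = stripSize l u + ∑ᶠ i, d i := by
  rw [stripSize, stripSize, ← finsum_add_distrib hu hd]
  exact finsum_congr fun i => by simp only [Pi.add_apply]; have := hlu i; omega

theorem IsHStrip.isPartition {l u : ℕ → ℕ} (h : IsHStrip l u) {n : ℕ}
    (hl : ∀ i, n ≤ i → l i = 0) : IsPartition u :=
  ⟨fun i => (h.2 i).trans (h.1 i), n + 1, fun i hi => by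
    have := h.2 (i - 1)
    rw [Nat.sub_add_cancel (by omega), hl _ (by omega)] at this
    omega⟩

section RaiseRows

variable {l u : ℕ → ℕ} {n : ℕ}

theorem IsHStrip.lower_eq_zero (hs : IsHStrip l u) (hu : ∀ i, n ≤ i → u i = 0) :
    ∀ i, n ≤ i → l i = 0 :=
  fun i hi => Nat.eq_zero_of_le_zero ((hs.1 i).trans_eq (hu i hi))

theorem stripSize_add_zeroExtend (hlu : ∀ i, l i ≤ u i) (hu : ∀ i, n ≤ i → u i = 0)
    (c : Fin (n + 1) → ℕ) : stripSize l (u + zeroExtend c) = stripSize l u + ∑ i, c i := by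
  rw [stripSize_add hlu, finsum_zeroExtend]
  · exact (Set.finite_Iio n).subset fun i hi => by
      by_contra h
      exact hi (by simp [hu i (by simpa using h)])
  · exact (Set.finite_Iio (n + 1)).subset fun i hi => by
      by_contra h
      exact hi (zeroExtend_of_le c (by simpa using h))

theorem isHStrip_add_zeroExtend_iff (hs : IsHStrip l u) (hl : ∀ i, n ≤ i → l i = 0)
    (c : Fin (n + 1) → ℕ) :
    IsHStrip l (u + zeroExtend c) ↔ ∀ j : Fin n, c j.succ ≤ l j - u (j + 1) := by
  refine ⟨fun h j => ?_, fun h => ⟨fun i => (hs.1 i).trans (Nat.le_add_right _ _), fun i => ?_⟩⟩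
  · have := h.2 j
    simp only [Pi.add_apply, zeroExtend_succ] at this
    omega
  · simp only [Pi.add_apply]
    by_cases hi : i < n
    · have hc := h ⟨i, hi⟩
      have hz := zeroExtend_succ c ⟨i, hi⟩
      have := hs.2 i
      simp only at hc hz
      omega
    · rw [zeroExtend_of_le c (by omega), hl i (by omega), add_zero]
      exact (hs.2 i).trans_eq (hl i (by omega))

theorem stripRowsBar_add_zeroExtend (hs : ∀ i, u (i + 1) ≤ l i) (hl : ∀ i, n ≤ i → l i = 0)
    (c : Fin (n + 1) → ℕ) :
    stripRowsBar l (u + zeroExtend c) = #{j : Fin n | c j.succ < l j - u (j + 1)} := by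
  have hrows : {i | (u + zeroExtend c) (i + 1) < l i} =
      Fin.val '' (({j : Fin n | c j.succ < l j - u (j + 1)} : Finset (Fin n)) : Set (Fin n)) := by
    ext i
    simp only [Set.mem_ofPred_eq, Pi.add_apply, coe_filter, mem_univ, true_and, Set.mem_image]
    constructor
    · intro h
      have hi : i < n := by by_contra hi; rw [hl i (by omega)] at h; omega
      have hz := zeroExtend_succ c ⟨i, hi⟩
      simp only at hz
      exact ⟨⟨i, hi⟩, by simp only; omega, rfl⟩
    · rintro ⟨j, hj, rfl⟩
      have := hs j
      rw [zeroExtend_succ]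
      omega
  rw [stripRowsBar, hrows, Set.ncard_image_of_injective _ Fin.val_injective, Set.ncard_coe_finset]

theorem IsHStrip.eq_add_zeroExtend {v : ℕ → ℕ} (hv : IsHStrip l v) (huv : ∀ i, u i ≤ v i)
    (hl : ∀ i, n ≤ i → l i = 0) (hu : ∀ i, n ≤ i → u i = 0) :
    v = u + zeroExtend fun i : Fin (n + 1) => v i - u i := by
  funext i
  by_cases hi : i < n + 1
  · have := huv i
    simp only [Pi.add_apply, zeroExtend, hi, dite_true]
    omega
  · have := hv.2 (i - 1)
    rw [Nat.sub_add_cancel (by omega), hl _ (by omega)] at this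
    simp only [Pi.add_apply, zeroExtend_of_le _ (Nat.not_lt.mp hi), hu i (by omega)]
    omega

theorem setOf_isHStrip_stripSize_le_eq_image (hs : IsHStrip l u) (hu : ∀ i, n ≤ i → u i = 0)
    {a : ℕ} (ha : stripSize l u ≤ a) :
    {v | IsPartition v ∧ (∀ i, u i ≤ v i) ∧ IsHStrip l v ∧ stripSize l v ≤ a} =
      (fun c : Fin (n + 1) → ℕ => u + zeroExtend c) ''
        ↑(boundedIncrements (a - stripSize l u) fun j : Fin n => l j - u (j + 1)) := by
  have hl := hs.lower_eq_zero hu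
  ext v
  simp only [Set.mem_ofPred_eq, Set.mem_image, mem_coe, mem_boundedIncrements]
  constructor
  · rintro ⟨-, huv, hlv, hsize⟩
    have hv := hlv.eq_add_zeroExtend huv hl hu
    set c : Fin (n + 1) → ℕ := fun i => v i - u i
    rw [hv, isHStrip_add_zeroExtend_iff hs hl] at hlv
    rw [hv, stripSize_add_zeroExtend hs.1 hu] at hsize
    exact ⟨c, ⟨hlv, by omega⟩, hv.symm⟩
  · rintro ⟨c, ⟨hc, hsum⟩, rfl⟩
    have hcv := (isHStrip_add_zeroExtend_iff hs hl c).mpr hc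
    refine ⟨hcv.isPartition hl, fun i => Nat.le_add_right _ _, hcv, ?_⟩
    rw [stripSize_add_zeroExtend hs.1 hu]
    omega

end RaiseRows

theorem hstrip_mobius_sum_le_general
    (lam mu : ℕ → ℕ) (hmu : IsPartition mu)
    (hstrip : IsHStrip lam mu) (a : ℕ) (haM : stripSize lam mu ≤ a) :
    (∑ᶠ nu ∈ {nu : ℕ → ℕ | IsPartition nu ∧ (∀ i, mu i ≤ nu i) ∧
        IsHStrip lam nu ∧ stripSize lam nu ≤ a},
      (-1 : ℤ) ^ (a - stripSize lam nu) *
        ((stripRowsBar lam nu).choose (a - stripSize lam nu) : ℤ)) = 1 := by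
  obtain ⟨n, hmu0⟩ := hmu.2
  rw [setOf_isHStrip_stripSize_le_eq_image hstrip hmu0 haM,
    finsum_mem_image fun c _ c' _ h => zeroExtend_injective (add_left_cancel h),
    finsum_mem_coe_finset]
  refine (sum_congr rfl fun c _ => ?_).trans (sum_neg_one_pow_mul_choose_eq_one _ _)
  rw [stripSize_add_zeroExtend hstrip.1 hmu0,
    stripRowsBar_add_zeroExtend hstrip.2 (hstrip.lower_eq_zero hmu0), Nat.sub_add_eq]

/-- Lemma 3 (2), rephrased: for a horizontal strip `μ/λ` and `a > 0` with `|μ/λ| ≤ a`,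
`∑_ν (−1)^{a−|ν/λ|} C(r(λ/ν̄), a−|ν/λ|) = 1`, the sum being over all partitions
`ν ⊇ μ` such that `ν/λ` is a horizontal strip and `|ν/λ| ≤ a`. -/
theorem hstrip_mobius_sum_le
    (lam mu : ℕ → ℕ) (hlam : IsPartition lam) (hmu : IsPartition mu)
    (hstrip : IsHStrip lam mu) (a : ℕ) (ha : 0 < a) (haM : stripSize lam mu ≤ a) :
    (∑ᶠ nu ∈ {nu : ℕ → ℕ | IsPartition nu ∧ (∀ i, mu i ≤ nu i) ∧
        IsHStrip lam nu ∧ stripSize lam nu ≤ a},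
      (-1 : ℤ) ^ (a - stripSize lam nu) *
        ((stripRowsBar lam nu).choose (a - stripSize lam nu) : ℤ)) = 1 :=
  hstrip_mobius_sum_le_general lam mu hmu hstrip a haM
end

section
/- Fix a partition λ and a positive integer a. Let Q be the set of partitions ν such that ν/λ is a horizontal strip and |ν/λ| ≥ a, ordered by inclusion ⊆, and let Q̂ = Q ∪ {⊥} be the locally finite poset obtained by adjoining a new least element ⊥. Then for every μ ∈ Q, μ_{Q̂}(⊥, μ) = −(−1)^{|μ/λ|−a} · C(r(μ/λ)−1, |μ/λ|−a), where C(m,k) is the ordinary binomial coefficient. -/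
open Finset

noncomputable def Apas (k : ℕ) (j : ℤ) : ℤ :=
  if j < 0 then 0 else ∑ t ∈ Finset.range (j.toNat + 1), (-1 : ℤ) ^ t * (k.choose t : ℤ)

lemma Apas_neg {k : ℕ} {j : ℤ} (h : j < 0) : Apas k j = 0 := if_pos h

lemma Apas_zero_of_nonneg {j : ℤ} (h : 0 ≤ j) : Apas 0 j = 1 := by
  rw [Apas, if_neg (not_lt.2 h), Finset.sum_eq_single 0]
  · simp
  · intro t _ ht
    cases t with
    | zero => exact absurd rfl ht
    | succ n => simp [Nat.choose_succ_succ]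
  · simp

lemma Apas_succ_of_nonneg (k : ℕ) {j : ℤ} (h : 0 ≤ j) :
    Apas (k + 1) j = (-1 : ℤ) ^ j.toNat * (k.choose j.toNat : ℤ) := by
  rw [Apas, if_neg (not_lt.2 h)]
  generalize j.toNat = m
  induction m with
  | zero => simp
  | succ m ih =>
      rw [Finset.sum_range_succ, ih, Nat.choose_succ_succ]
      push_cast
      ring

lemma Apas_step (k : ℕ) (j : ℤ) : Apas k (j + 1) = Apas k j + Apas (k + 1) (j + 1) := by
  rcases lt_trichotomy (j + 1) 0 with h | h | h
  · rw [Apas_neg h, Apas_neg h, Apas_neg (by omega)]; ring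
  · have hj : j = -1 := by omega
    subst hj
    have h0 : Apas k (-1) = 0 := Apas_neg (by norm_num)
    rw [show (-1 : ℤ) + 1 = 0 from by norm_num, h0]
    simp [Apas]
  · have h0 : (0:ℤ) ≤ j := by omega
    have h1 : (0:ℤ) ≤ j + 1 := by omega
    have ht : (j + 1).toNat = j.toNat + 1 := by omega
    rw [Apas_succ_of_nonneg k h1, Apas, Apas, if_neg (not_lt.2 h0), if_neg (not_lt.2 h1), ht,
      Finset.sum_range_succ]

lemma Apas_telescope (c k : ℕ) (j : ℤ) :
    ∑ x : Fin (c + 1), Apas (k + if (x : ℕ) ≠ 0 then 1 else 0) (j + (x : ℕ)) = Apas k (j + c) := by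
  induction c with
  | zero => simp
  | succ c ih =>
      rw [Fin.sum_univ_castSucc]
      have hlast : ((Fin.last (c+1) : Fin (c+2)) : ℕ) = c + 1 := rfl
      have hcs : ∀ x : Fin (c+1), ((x.castSucc : Fin (c+2)) : ℕ) = (x : ℕ) := fun x => rfl
      simp only [hcs, hlast, ih]
      rw [if_pos (by omega)]
      have hstep := Apas_step k (j + c)
      push_cast
      rw [show j + ((c:ℤ) + 1) = (j + c) + 1 from by ring, hstep]

lemma main_identity : ∀ (r : ℕ) (c : Fin r → ℕ) (a : ℤ),
    ∑ x : (∀ i, Fin (c i + 1)),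
      Apas (#(univ.filter (fun i => ((x i : ℕ) ≠ 0)))) ((∑ i, (x i : ℕ) : ℕ) - a)
      = if a ≤ (∑ i, c i : ℕ) then 1 else 0 := by
  intro r
  induction r with
  | zero =>
      intro c a
      have hconst : ∀ x : (∀ i, Fin (c i + 1)),
          Apas (#(univ.filter (fun i => ((x i : ℕ) ≠ 0)))) ((∑ i, (x i : ℕ) : ℕ) - a)
          = Apas 0 (0 - a) := by
        intro x; simp
      rw [Finset.sum_congr rfl (fun x _ => hconst x), Finset.sum_const]
      have hcard : (univ : Finset (∀ i : Fin 0, Fin (c i + 1))).card = 1 := by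
        simp [Finset.card_univ]
      rw [hcard, one_nsmul]
      have hz : (∑ i : Fin 0, c i) = 0 := by simp
      rw [hz]
      rcases le_or_gt a 0 with h | h
      · rw [Apas_zero_of_nonneg (by omega), if_pos (by push_cast; omega)]
      · rw [Apas_neg (by omega), if_neg (by push_cast; omega)]
  | succ r ih =>
      intro c a
      set F : (∀ i : Fin (r+1), Fin (c i + 1)) → ℤ := fun x =>
        Apas (#(univ.filter (fun i => ((x i : ℕ) ≠ 0)))) ((∑ i, (x i : ℕ) : ℕ) - a) with hF
      have key : ∀ (y : ∀ i : Fin r, Fin (c i.succ + 1)),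
          ∑ x₀ : Fin (c 0 + 1), F (Fin.cons x₀ y)
          = Apas (#(univ.filter (fun i => ((y i : ℕ) ≠ 0))))
              ((∑ i, (y i : ℕ) : ℕ) - (a - c 0)) := by
        intro y
        have hsum : ∀ x₀ : Fin (c 0 + 1),
            (∑ i, ((Fin.cons x₀ y : ∀ i, Fin (c i + 1)) i : ℕ)) = (x₀ : ℕ) + ∑ i, (y i : ℕ) := by
          intro x₀
          rw [show (fun i => ((Fin.cons x₀ y : ∀ i, Fin (c i + 1)) i : ℕ))
              = Fin.cons (x₀ : ℕ) (fun i => (y i : ℕ)) from funext (Fin.cases rfl (fun i => rfl))]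
          exact Fin.sum_cons _ _
        have hcard : ∀ x₀ : Fin (c 0 + 1),
            #(univ.filter (fun i => (((Fin.cons x₀ y : ∀ i, Fin (c i + 1)) i : ℕ) ≠ 0)))
            = #(univ.filter (fun i => ((y i : ℕ) ≠ 0))) + (if (x₀ : ℕ) ≠ 0 then 1 else 0) := by
          intro x₀
          classical
          rw [Finset.card_filter, Finset.card_filter]
          rw [show (fun i : Fin (r+1) =>
                if (((Fin.cons x₀ y : ∀ i, Fin (c i + 1)) i : ℕ) ≠ 0) then (1:ℕ) else 0)
              = Fin.cons (if (x₀:ℕ) ≠ 0 then 1 else 0) (fun i => if ((y i : ℕ) ≠ 0) then 1 else 0)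
              from funext (Fin.cases rfl (fun i => rfl))]
          rw [Fin.sum_cons]
          ring
        calc ∑ x₀ : Fin (c 0 + 1), F (Fin.cons x₀ y)
            = ∑ x₀ : Fin (c 0 + 1),
              Apas (#(univ.filter (fun i => ((y i : ℕ) ≠ 0))) + if (x₀ : ℕ) ≠ 0 then 1 else 0)
                (((∑ i, (y i : ℕ) : ℕ) - (a - c 0) - c 0) + (x₀ : ℕ)) := by
              refine Finset.sum_congr rfl (fun x₀ _ => ?_)
              rw [hF]
              simp only []
              rw [hcard x₀, hsum x₀]
              congr 1
              push_cast
              ring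
          _ = _ := by
              rw [Apas_telescope]
              congr 1
              ring
      have h1 : ∑ x, F x
          = ∑ p : Fin (c 0 + 1) × (∀ i : Fin r, Fin (c i.succ + 1)), F (Fin.cons p.1 p.2) :=
        (Fintype.sum_equiv (Fin.consEquiv (fun i => Fin (c i + 1)))
          (fun p => F (Fin.cons p.1 p.2)) F (fun p => rfl)).symm
      have h2 : ∑ p : Fin (c 0 + 1) × (∀ i : Fin r, Fin (c i.succ + 1)), F (Fin.cons p.1 p.2)
          = ∑ y : (∀ i : Fin r, Fin (c i.succ + 1)), ∑ x₀ : Fin (c 0 + 1), F (Fin.cons x₀ y) := by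
        rw [Fintype.sum_prod_type_right]
      rw [h1, h2, Finset.sum_congr rfl (fun y _ => key y), ih _ (a - c 0)]
      have hiff : (a ≤ ((∑ i, c i : ℕ) : ℤ)) ↔ ((a - c 0) ≤ ((∑ i : Fin r, c i.succ : ℕ) : ℤ)) := by
        rw [Fin.sum_univ_succ c]
        push_cast
        omega
      by_cases h : a ≤ ((∑ i, c i : ℕ) : ℤ)
      · rw [if_pos h, if_pos (hiff.mp h)]
      · rw [if_neg h, if_neg (fun hc => h (hiff.mpr hc))]

lemma stripSize_eq_sum (lam ρ : ℕ → ℕ) (N : ℕ) (hN : ∀ i, N ≤ i → ρ i = 0) :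
    stripSize lam ρ = ∑ i ∈ Finset.range N, (ρ i - lam i) := by
  apply finsum_eq_sum_of_support_subset
  intro i hi
  simp only [Function.mem_support] at hi
  simp only [Finset.coe_range, Set.mem_Iio]
  by_contra h
  exact hi (by rw [hN i (not_lt.mp h)]; simp)

lemma stripRows_eq_card (lam ρ : ℕ → ℕ) (N : ℕ) (hN : ∀ i, N ≤ i → ρ i = 0) :
    stripRows lam ρ = #((Finset.range N).filter (fun i => lam i < ρ i)) := by
  rw [stripRows, show {i | lam i < ρ i} = ↑((Finset.range N).filter (fun i => lam i < ρ i)) from ?_,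
    Set.ncard_coe_finset]
  ext i
  simp only [Set.mem_setOf_eq, Finset.coe_filter, Finset.mem_range, Set.mem_setOf_eq]
  constructor
  · intro h
    refine ⟨?_, h⟩
    by_contra hc
    rw [hN i (not_lt.mp hc)] at h
    omega
  · exact fun h => h.2

open Classical in
lemma key_sum (lam : ℕ → ℕ) (hlam : IsPartition lam) (a : ℕ) (ha : 0 < a)
    (μ : {nu : ℕ → ℕ // IsPartition nu ∧ IsHStrip lam nu ∧ a ≤ stripSize lam nu}) :
    ∃ T : Finset {nu : ℕ → ℕ // IsPartition nu ∧ IsHStrip lam nu ∧ a ≤ stripSize lam nu},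
      (∀ ρ, ρ ∈ T ↔ ρ.1 ≤ μ.1) ∧
      ∑ ρ ∈ T, ((-1:ℤ) ^ (stripSize lam ρ.1 - a) *
        ((stripRows lam ρ.1 - 1).choose (stripSize lam ρ.1 - a) : ℤ)) = 1 := by
  classical
  obtain ⟨N, hN⟩ := μ.2.1.2
  have hlamμ : ∀ i, lam i ≤ μ.1 i := μ.2.2.1.1
  have hstripμ : ∀ i, μ.1 (i+1) ≤ lam i := μ.2.2.1.2
  have hlam0 : ∀ i, N ≤ i → lam i = 0 := fun i hi => by
    have := hlamμ i; rw [hN i hi] at this; omega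
  set c : Fin N → ℕ := fun i => μ.1 i - lam i with hc
  set s : Finset (∀ i : Fin N, Fin (c i + 1)) :=
    univ.filter (fun x => a ≤ ∑ i, (x i : ℕ)) with hs
  set val : (∀ i : Fin N, Fin (c i + 1)) → (ℕ → ℕ) :=
    fun x i => lam i + if h : i < N then (x ⟨i, h⟩ : ℕ) else 0 with hvaldef
  -- basic facts about val
  have hval_le : ∀ x i, val x i ≤ μ.1 i := by
    intro x i
    by_cases h : i < N
    · simp only [hvaldef, dif_pos h]
      have hb : (x ⟨i, h⟩ : ℕ) < μ.1 i - lam i + 1 := (x ⟨i, h⟩).isLt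
      have hl := hlamμ i
      omega
    · simp only [hvaldef, dif_neg h]
      exact le_trans (le_of_eq (Nat.add_zero _)) (hlamμ i)
  have hval_ge : ∀ x i, lam i ≤ val x i := fun x i => Nat.le_add_right _ _
  have hval_zero : ∀ x i, N ≤ i → val x i = 0 := by
    intro x i hi
    simp only [hvaldef, dif_neg (not_lt.mpr hi)]
    rw [hlam0 i hi]
  have hval_strip : ∀ x i, val x (i+1) ≤ lam i :=
    fun x i => le_trans (hval_le x (i+1)) (hstripμ i)
  have hval_part : ∀ x, IsPartition (val x) := by
    intro x
    constructor
    · exact fun i => le_trans (hval_strip x i) (hval_ge x i)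
    · exact ⟨N, hval_zero x⟩
  have hval_hstrip : ∀ x, IsHStrip lam (val x) := fun x => ⟨hval_ge x, hval_strip x⟩
  have hval_size : ∀ x, stripSize lam (val x) = ∑ i, (x i : ℕ) := by
    intro x
    rw [stripSize_eq_sum lam (val x) N (hval_zero x),
      Finset.sum_range (fun i => val x i - lam i)]
    apply Finset.sum_congr rfl
    intro i _
    simp only [hvaldef, dif_pos i.isLt, Fin.eta]
    omega
  have hval_rows : ∀ x, stripRows lam (val x) = #(univ.filter (fun i : Fin N => (x i : ℕ) ≠ 0)) := by
    intro x
    rw [stripRows_eq_card lam (val x) N (hval_zero x), Finset.card_filter, Finset.card_filter,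
      Finset.sum_range (fun i => if lam i < val x i then 1 else 0)]
    apply Finset.sum_congr rfl
    intro i _
    simp only [hvaldef, dif_pos i.isLt, Fin.eta]
    simp only [show (lam (i:ℕ) < lam (i:ℕ) + (x i : ℕ)) ↔ ((x i : ℕ) ≠ 0) from by
      constructor <;> omega]
  -- the elements of Q below μ
  have hmk : ∀ x ∈ s, IsPartition (val x) ∧ IsHStrip lam (val x) ∧ a ≤ stripSize lam (val x) := by
    intro x hx
    refine ⟨hval_part x, hval_hstrip x, ?_⟩
    rw [hval_size x]
    exact (Finset.mem_filter.mp hx).2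
  set T : Finset {nu : ℕ → ℕ // IsPartition nu ∧ IsHStrip lam nu ∧ a ≤ stripSize lam nu} :=
    s.attach.image (fun x => ⟨val x.1, hmk x.1 x.2⟩) with hT
  refine ⟨T, ?_, ?_⟩
  · intro ρ
    constructor
    · intro hρ
      obtain ⟨x, _, hx⟩ := Finset.mem_image.mp hρ
      intro i
      rw [← hx]
      exact hval_le x.1 i
    · intro hρ
      have hρlam : ∀ i, lam i ≤ ρ.1 i := ρ.2.2.1.1
      have hρ0 : ∀ i, N ≤ i → ρ.1 i = 0 := by
        intro i hi
        have h1 : ρ.1 i ≤ μ.1 i := hρ i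
        have h2 : μ.1 i = 0 := hN i hi
        omega
      set x : ∀ i : Fin N, Fin (c i + 1) :=
        fun i => ⟨ρ.1 i - lam i, by
          have h1 : ρ.1 (i:ℕ) ≤ μ.1 (i:ℕ) := hρ (i:ℕ)
          have h2 := hlamμ (i : ℕ)
          have h3 : c i = μ.1 (i:ℕ) - lam (i:ℕ) := rfl
          omega⟩ with hx
      have hxval : val x = ρ.1 := by
        funext i
        by_cases h : i < N
        · simp only [hvaldef, dif_pos h, hx]
          have := hρlam i
          omega
        · simp only [hvaldef, dif_neg h]
          rw [hlam0 i (not_lt.mp h), hρ0 i (not_lt.mp h)]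
      have hxs : x ∈ s := by
        rw [hs, Finset.mem_filter]
        refine ⟨Finset.mem_univ _, ?_⟩
        have : ∑ i, (x i : ℕ) = stripSize lam (val x) := (hval_size x).symm
        rw [this, hxval]
        exact ρ.2.2.2
      refine Finset.mem_image.mpr ⟨⟨x, hxs⟩, Finset.mem_attach _ _, ?_⟩
      exact Subtype.ext hxval
  · -- the sum
    have hinj : ∀ x ∈ s.attach, ∀ y ∈ s.attach,
        (⟨val x.1, hmk x.1 x.2⟩ : {nu : ℕ → ℕ // IsPartition nu ∧ IsHStrip lam nu ∧ a ≤ stripSize lam nu}) =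
        ⟨val y.1, hmk y.1 y.2⟩ → x = y := by
      intro x _ y _ hxy
      have h1 : val x.1 = val y.1 := congrArg Subtype.val hxy
      apply Subtype.ext
      funext i
      apply Fin.ext
      have := congrFun h1 (i : ℕ)
      simpa only [hvaldef, dif_pos i.isLt, Fin.eta, Nat.add_left_cancel_iff] using this
    rw [hT, Finset.sum_image hinj]
    have hterm : ∀ x : {x // x ∈ s},
        ((-1:ℤ) ^ (stripSize lam (val x.1) - a) *
          ((stripRows lam (val x.1) - 1).choose (stripSize lam (val x.1) - a) : ℤ))
        = Apas (#(univ.filter (fun i : Fin N => ((x.1 i : ℕ) ≠ 0))))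
            ((∑ i, (x.1 i : ℕ) : ℕ) - (a : ℤ)) := by
      intro x
      have hxs := (Finset.mem_filter.mp x.2).2
      have hk : 1 ≤ #(univ.filter (fun i : Fin N => ((x.1 i : ℕ) ≠ 0))) := by
        rcases Nat.eq_zero_or_pos (#(univ.filter (fun i : Fin N => ((x.1 i : ℕ) ≠ 0)))) with h0 | h1
        · exfalso
          have hemp := Finset.card_eq_zero.mp h0
          have hall : ∀ i ∈ (univ : Finset (Fin N)), (x.1 i : ℕ) = 0 := by
            intro i hi
            by_contra hne
            have : i ∈ univ.filter (fun i : Fin N => ((x.1 i : ℕ) ≠ 0)) :=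
              Finset.mem_filter.mpr ⟨hi, hne⟩
            rw [hemp] at this
            exact absurd this (Finset.notMem_empty _)
          have : (∑ i, (x.1 i : ℕ)) = 0 := Finset.sum_eq_zero hall
          omega
        · exact h1
      set n := ∑ i, (x.1 i : ℕ) with hn
      set k := #(univ.filter (fun i : Fin N => ((x.1 i : ℕ) ≠ 0))) with hkk
      have hsz : stripSize lam (val x.1) = n := hval_size x.1
      have hrw : stripRows lam (val x.1) = k := hval_rows x.1
      rw [hsz, hrw]
      have hj : (0:ℤ) ≤ (n : ℤ) - a := by omega
      have htn : ((n : ℤ) - a).toNat = n - a := by omega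
      rw [show k = (k - 1) + 1 from by omega, Apas_succ_of_nonneg _ hj, htn]
      norm_num
    rw [Finset.sum_congr rfl (fun x _ => hterm x), Finset.sum_attach s
      (fun x => Apas (#(univ.filter (fun i : Fin N => ((x i : ℕ) ≠ 0)))) ((∑ i, (x i : ℕ) : ℕ) - (a : ℤ)))]
    rw [Finset.sum_subset (Finset.filter_subset _ _)
      (by
        intro x _ hxs
        have : ¬ (a ≤ ∑ i, (x i : ℕ)) := by
          intro hc
          exact hxs (Finset.mem_filter.mpr ⟨Finset.mem_univ _, hc⟩)
        exact Apas_neg (by omega))]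
    have hcs : (∑ i, c i) = stripSize lam μ.1 := by
      rw [stripSize_eq_sum lam μ.1 N hN, Finset.sum_range (fun i => μ.1 i - lam i)]
    have hq := μ.2.2.2
    rw [main_identity N c (a : ℤ), if_pos (by omega)]

lemma size_lt (lam : ℕ → ℕ) (a : ℕ)
    (ρ μ : {nu : ℕ → ℕ // IsPartition nu ∧ IsHStrip lam nu ∧ a ≤ stripSize lam nu})
    (h : ρ.1 ≤ μ.1) (hne : ρ ≠ μ) : stripSize lam ρ.1 < stripSize lam μ.1 := by
  obtain ⟨N, hN⟩ := μ.2.1.2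
  have hρ0 : ∀ i, N ≤ i → ρ.1 i = 0 := by
    intro i hi
    have h1 : ρ.1 i ≤ μ.1 i := h i
    have h2 : μ.1 i = 0 := hN i hi
    omega
  rw [stripSize_eq_sum lam ρ.1 N hρ0, stripSize_eq_sum lam μ.1 N hN]
  apply Finset.sum_lt_sum
  · exact fun i _ => Nat.sub_le_sub_right (h i) _
  · have hex : ∃ i, ρ.1 i ≠ μ.1 i := by
      by_contra hc
      push_neg at hc
      exact hne (Subtype.ext (funext hc))
    obtain ⟨i, hi⟩ := hex
    have hlt : ρ.1 i < μ.1 i := lt_of_le_of_ne (h i) hi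
    have hiN : i < N := by
      by_contra hc
      have := hN i (not_lt.mp hc)
      omega
    exact ⟨i, Finset.mem_range.mpr hiN,
      Nat.sub_lt_sub_right (ρ.2.2.1.1 i) hlt⟩

open Classical in
/-- Lemma 3 (1): fix a partition `λ` and `a > 0`; let `Q` be the poset (under pointwise
`≤`) of partitions `ν` such that `ν/λ` is a horizontal strip with `|ν/λ| ≥ a`, and
`Q̂ = WithBot Q`.  If `mu` is the Möbius function of `Q̂` (characterized by
`∑_{x ≤ z ≤ y} mu x z = δ_{x,y}` over the finite intervals), then for `μ ∈ Q`,
`mu ⊥ μ = −(−1)^{|μ/λ|−a} C(r(μ/λ)−1, |μ/λ|−a)`. -/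
theorem mobius_bot_hstrip_ge
    (lam : ℕ → ℕ) (hlam : IsPartition lam) (a : ℕ) (ha : 0 < a)
    (mu : WithBot {nu : ℕ → ℕ // IsPartition nu ∧ IsHStrip lam nu ∧ a ≤ stripSize lam nu} →
          WithBot {nu : ℕ → ℕ // IsPartition nu ∧ IsHStrip lam nu ∧ a ≤ stripSize lam nu} → ℤ)
    (hmu : ∀ u v, u ≤ v →
      (∑ᶠ z ∈ Set.Icc u v, mu u z) = if u = v then (1 : ℤ) else 0)
    (m : {nu : ℕ → ℕ // IsPartition nu ∧ IsHStrip lam nu ∧ a ≤ stripSize lam nu}) :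
    mu ⊥ (↑m) = -((-1 : ℤ) ^ (stripSize lam m.1 - a) *
      ((stripRows lam m.1 - 1).choose (stripSize lam m.1 - a) : ℤ)) := by
  classical
  let Qt := {nu : ℕ → ℕ // IsPartition nu ∧ IsHStrip lam nu ∧ a ≤ stripSize lam nu}
  set G : Qt → ℤ := fun ρ => (-1:ℤ) ^ (stripSize lam ρ.1 - a) *
      ((stripRows lam ρ.1 - 1).choose (stripSize lam ρ.1 - a) : ℤ) with hG
  have hbot : mu ⊥ ⊥ = 1 := by
    have := hmu ⊥ ⊥ le_rfl
    rw [Set.Icc_self, finsum_mem_singleton, if_pos rfl] at this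
    exact this
  suffices hmain : ∀ n (μ : Qt), stripSize lam μ.1 ≤ n → mu ⊥ (↑μ) = -(G μ) by
    exact hmain (stripSize lam m.1) m le_rfl
  intro n
  induction n with
  | zero =>
      intro μ hμ
      exfalso
      have := μ.2.2.2
      omega
  | succ n ih =>
      intro μ hμ
      obtain ⟨T, hT, hTsum⟩ := key_sum lam hlam a ha μ
      have hIcc : Set.Icc (⊥ : WithBot Qt) (↑μ)
          = ↑(insert (⊥ : WithBot Qt) (T.image (fun (ρ : Qt) => (↑ρ : WithBot Qt)))) := by
        ext z
        simp only [Set.mem_Icc, bot_le, true_and, Finset.coe_insert, Set.mem_insert_iff,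
          Finset.mem_coe, Finset.mem_image]
        cases z with
        | bot => simp
        | coe ρ =>
            constructor
            · intro hz
              right
              have hle : ρ ≤ μ := WithBot.coe_le_coe.mp hz
              exact ⟨ρ, (hT ρ).mpr hle, rfl⟩
            · rintro (hz | ⟨σ, hσ, hσz⟩)
              · exact absurd hz (WithBot.coe_ne_bot)
              · obtain rfl : σ = ρ := WithBot.coe_injective hσz
                have hle : σ ≤ μ := (hT σ).mp hσ
                exact WithBot.coe_le_coe.mpr hle
      have h0 := hmu ⊥ (↑μ) bot_le
      rw [if_neg (WithBot.bot_ne_coe), hIcc, finsum_mem_coe_finset,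
        Finset.sum_insert (by
          simp only [Finset.mem_image]
          rintro ⟨σ, _, hσ⟩
          exact WithBot.coe_ne_bot hσ),
        Finset.sum_image (fun x _ y _ hxy => WithBot.coe_injective hxy), hbot] at h0
      have hμT : μ ∈ T := (hT μ).mpr le_rfl
      rw [← Finset.sum_erase_add T _ hμT] at h0
      have herase : ∀ ρ ∈ T.erase μ, mu ⊥ (↑ρ) = -(G ρ) := by
        intro ρ hρ
        have hρne : ρ ≠ μ := Finset.ne_of_mem_erase hρ
        have hρT : ρ ∈ T := Finset.mem_of_mem_erase hρ
        have hlt : stripSize lam ρ.1 < stripSize lam μ.1 := size_lt lam a ρ μ ((hT ρ).mp hρT) hρne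
        exact ih ρ (by omega)
      rw [Finset.sum_congr rfl herase] at h0
      have h1 : ∑ ρ ∈ T, G ρ = 1 := hTsum
      have h2 : ∑ ρ ∈ T.erase μ, G ρ + G μ = 1 := by
        rw [Finset.sum_erase_add T G hμT]; exact h1
      have h3 : ∑ ρ ∈ T.erase μ, -(G ρ) = -(∑ ρ ∈ T.erase μ, G ρ) := by
        rw [Finset.sum_neg_distrib]
      linarith [h0, h2, h3]
end

section
/- Fix a partition λ and a positive integer a. Let Q be the (finite) set of partitions ν such that ν/λ is a horizontal strip and |ν/λ| ≤ a, ordered by inclusion ⊆, and let Q̂ = Q ∪ {⊤} be the poset obtained by adjoining a new greatest element ⊤. Then for every μ ∈ Q, μ_{Q̂}(μ, ⊤) = −(−1)^{a−|μ/λ|} · C(r(λ/μ̄), a−|μ/λ|), where C(m,k) is the ordinary binomial coefficient and r(λ/μ̄) = #{i ≥ 1 : μ (i+1) < λ i} with μ̄ = (μ_2, μ_3, …). -/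
def fcoef (n : ℕ) : ℤ := if n = 0 then 1 else if n = 1 then -1 else 0

lemma fcoef_zero : fcoef 0 = 1 := rfl
lemma fcoef_one : fcoef 1 = -1 := rfl
lemma fcoef_of_two_le {n : ℕ} (h : 2 ≤ n) : fcoef n = 0 := by
  unfold fcoef; rw [if_neg (by omega), if_neg (by omega)]

lemma alt_sum_choose (r b : ℕ) :
    ∑ k ∈ Finset.range (b+1), (-1:ℤ)^k * ((r+1).choose k) = (-1)^b * (r.choose b) := by
  induction b with
  | zero => simp
  | succ b ih =>
      rw [Finset.sum_range_succ, ih, Nat.choose_succ_succ' r b]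
      push_cast
      ring

lemma sum_powerset_filter_card_le {α : Type*} [DecidableEq α] (S : Finset α) (b : ℕ) :
    ∑ T ∈ S.powerset.filter (fun T => T.card ≤ b), (-1:ℤ)^T.card
      = ∑ k ∈ Finset.range (b+1), (-1:ℤ)^k * (S.card.choose k) := by
  have hset : S.powerset.filter (fun T => T.card ≤ b)
      = (Finset.range (b+1)).biUnion (fun k => S.powersetCard k) := by
    ext T
    simp only [Finset.mem_filter, Finset.mem_powerset, Finset.mem_biUnion, Finset.mem_range,
      Finset.mem_powersetCard]
    constructor
    · rintro ⟨h1, h2⟩; exact ⟨T.card, Nat.lt_succ_of_le h2, h1, rfl⟩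
    · rintro ⟨k, hk, h1, rfl⟩; exact ⟨h1, Nat.lt_succ_iff.mp hk⟩
  rw [hset, Finset.sum_biUnion]
  · refine Finset.sum_congr rfl fun k _ => ?_
    rw [Finset.sum_congr rfl (fun T hT => by
      rw [(Finset.mem_powersetCard.mp hT).2]), Finset.sum_const, Finset.card_powersetCard]
    simp [mul_comm]
  · intro x hx y hy hxy
    apply Finset.disjoint_left.mpr
    intro T hTx hTy
    exact hxy ((Finset.mem_powersetCard.mp hTx).2.symm.trans (Finset.mem_powersetCard.mp hTy).2)

open Classical in
/-- Lemma 3 (2): fix a partition `λ` and `a > 0`; let `Q` be the poset (under pointwise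
`≤`) of partitions `ν` such that `ν/λ` is a horizontal strip with `|ν/λ| ≤ a`, and
`Q̂ = WithTop Q`.  If `mu` is the Möbius function of `Q̂` (characterized by
`∑_{x ≤ z ≤ y} mu x z = δ_{x,y}`), then for `μ ∈ Q`,
`mu μ ⊤ = −(−1)^{a−|μ/λ|} C(r(λ/μ̄), a−|μ/λ|)`. -/
theorem mobius_top_hstrip_le
    (lam : ℕ → ℕ) (hlam : IsPartition lam) (a : ℕ) (ha : 0 < a)
    (mu : WithTop {nu : ℕ → ℕ // IsPartition nu ∧ IsHStrip lam nu ∧ stripSize lam nu ≤ a} →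
          WithTop {nu : ℕ → ℕ // IsPartition nu ∧ IsHStrip lam nu ∧ stripSize lam nu ≤ a} → ℤ)
    (hmu : ∀ u v, u ≤ v →
      (∑ᶠ z ∈ Set.Icc u v, mu u z) = if u = v then (1 : ℤ) else 0)
    (m : {nu : ℕ → ℕ // IsPartition nu ∧ IsHStrip lam nu ∧ stripSize lam nu ≤ a}) :
    mu (↑m) ⊤ = -((-1 : ℤ) ^ (a - stripSize lam m.1) *
      ((stripRowsBar lam m.1).choose (a - stripSize lam m.1) : ℤ)) := by
  classical
  obtain ⟨N, hN⟩ := hlam.2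
  set K := N + a with hKdef
  have hKpos : 0 < K := by omega
  have hlamK : ∀ j, K ≤ j → lam j = 0 := fun j hj => hN j (by omega)
  -- antitone
  have hanti : ∀ (f : ℕ → ℕ), IsPartition f → ∀ i j, i ≤ j → f j ≤ f i := by
    intro f hf i j hij
    exact antitone_nat_of_succ_le hf.1 hij
  -- stripSize as a finite sum
  have hsizeEq' : ∀ f : ℕ → ℕ, (∀ j, K ≤ j → f j = 0) →
      stripSize lam f = ∑ j ∈ Finset.range K, (f j - lam j) := by
    intro f hf
    apply finsum_eq_sum_of_support_subset
    intro j hj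
    simp only [Function.mem_support] at hj
    simp only [Finset.coe_range, Set.mem_Iio]
    by_contra h
    exact hj (by rw [hf j (by omega)]; simp)
  -- every element of Q vanishes from K on
  have hvanish : ∀ (nu : ℕ → ℕ), IsPartition nu → IsHStrip lam nu → stripSize lam nu ≤ a →
      ∀ j, K ≤ j → nu j = 0 := by
    intro nu hp hs hsize j hj
    obtain ⟨hmono, M₀, hM₀⟩ := hp
    have hanti' : ∀ i j, i ≤ j → nu j ≤ nu i := hanti nu ⟨hmono, M₀, hM₀⟩
    have key : nu K = 0 := by
      by_contra h
      have h1 : 1 ≤ nu K := Nat.one_le_iff_ne_zero.mpr h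
      set M := max (K+1) M₀ with hM
      have hsum : stripSize lam nu = ∑ j ∈ Finset.range M, (nu j - lam j) := by
        apply finsum_eq_sum_of_support_subset
        intro j hj
        simp only [Function.mem_support] at hj
        simp only [Finset.coe_range, Set.mem_Iio]
        by_contra hc
        push_neg at hc
        exact hj (by rw [hM₀ j (by omega)]; simp)
      have hsub : Finset.Icc N K ⊆ Finset.range M := by
        intro j hj
        simp only [Finset.mem_Icc] at hj
        simp only [Finset.mem_range]
        omega
      have h2 : ∑ j ∈ Finset.Icc N K, (nu j - lam j) ≤ ∑ j ∈ Finset.range M, (nu j - lam j) :=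
        Finset.sum_le_sum_of_subset hsub
      have h3 : ∀ j ∈ Finset.Icc N K, 1 ≤ nu j - lam j := by
        intro j hj
        simp only [Finset.mem_Icc] at hj
        have := hanti' j K hj.2
        have := hN j hj.1
        omega
      have h5 : (Finset.Icc N K).card ≤ ∑ j ∈ Finset.Icc N K, (nu j - lam j) := by
        calc (Finset.Icc N K).card = ∑ _j ∈ Finset.Icc N K, 1 := by
              rw [Finset.sum_const, smul_eq_mul, mul_one]
          _ ≤ _ := Finset.sum_le_sum h3
      rw [Nat.card_Icc] at h5
      rw [hsum] at hsize
      omega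
    exact Nat.le_zero.mp (key ▸ hanti' K j hj)
  revert mu hmu m
  set Q := {nu : ℕ → ℕ // IsPartition nu ∧ IsHStrip lam nu ∧ stripSize lam nu ≤ a} with hQdef
  intro mu hmu m
  have hvan : ∀ (nu : Q) j, K ≤ j → nu.1 j = 0 := fun nu => hvanish nu.1 nu.2.1 nu.2.2.1 nu.2.2.2
  have hQle : ∀ x y : Q, x ≤ y ↔ ∀ j, x.1 j ≤ y.1 j := fun x y => Iff.rfl
  have hsizeEq : ∀ nu : Q, stripSize lam nu.1 = ∑ j ∈ Finset.range K, (nu.1 j - lam j) :=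
    fun nu => hsizeEq' nu.1 (hvan nu)
  -- bound
  have hbound : ∀ (nu : Q) j, nu.1 j < lam 0 + a + 1 := by
    intro nu j
    have h0 : nu.1 j ≤ nu.1 0 := hanti nu.1 nu.2.1 0 j (Nat.zero_le j)
    have h1 : nu.1 0 - lam 0 ≤ ∑ j ∈ Finset.range K, (nu.1 j - lam j) :=
      Finset.single_le_sum (f := fun j => nu.1 j - lam j) (fun i _ => Nat.zero_le _)
        (Finset.mem_range.mpr hKpos)
    have h2 := nu.2.2.2
    rw [hsizeEq nu] at h2
    omega
  have hfinQ : Finite Q := by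
    apply Finite.of_injective (fun (nu : Q) (j : Fin K) => (⟨nu.1 j, hbound nu j⟩ : Fin (lam 0 + a + 1)))
    intro x y hxy
    apply Subtype.ext
    funext j
    rcases lt_or_ge j K with hj | hj
    · have := congrFun hxy ⟨j, hj⟩
      simpa using this
    · rw [hvan x j hj, hvan y j hj]
  letI : Fintype Q := Fintype.ofFinite Q
  -- description of intervals between coes
  have hIcc : ∀ x y : Q, (Set.Icc (↑x) (↑y) : Set (WithTop Q)) =
      ↑((Finset.univ.filter (fun t : Q => x ≤ t ∧ t ≤ y)).image (fun t : Q => (↑t : WithTop Q))) := by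
    intro x y
    ext z
    simp only [Set.mem_Icc, Finset.coe_image, Finset.coe_filter, Finset.mem_univ, true_and,
      Set.mem_image, Set.mem_setOf_eq]
    constructor
    · rintro ⟨h1, h2⟩
      rcases z with _ | t
      · exact absurd h2 (WithTop.not_top_le_coe y)
      · exact ⟨t, ⟨WithTop.coe_le_coe.mp h1, WithTop.coe_le_coe.mp h2⟩, rfl⟩
    · rintro ⟨t, ⟨h1, h2⟩, rfl⟩
      exact ⟨WithTop.coe_le_coe.mpr h1, WithTop.coe_le_coe.mpr h2⟩
  -- betweenness: anything pointwise between two Q elements is in Q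
  have hbetween : ∀ (x y : Q) (f : ℕ → ℕ), (∀ j, x.1 j ≤ f j) → (∀ j, f j ≤ y.1 j) →
      IsPartition f ∧ IsHStrip lam f ∧ stripSize lam f ≤ a := by
    intro x y f hxf hfy
    have hfv : ∀ j, K ≤ j → f j = 0 := fun j hj => Nat.le_zero.mp ((hfy j).trans (hvan y j hj).le)
    refine ⟨⟨fun i => ?_, K, hfv⟩,
      ⟨fun i => (x.2.2.1.1 i).trans (hxf i), fun i => (hfy (i+1)).trans (y.2.2.1.2 i)⟩, ?_⟩
    · calc f (i+1) ≤ y.1 (i+1) := hfy _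
        _ ≤ lam i := y.2.2.1.2 i
        _ ≤ x.1 i := x.2.2.1.1 i
        _ ≤ f i := hxf i
    · have hy := y.2.2.2
      rw [hsizeEq y] at hy
      rw [hsizeEq' f hfv]
      exact le_trans (Finset.sum_le_sum fun j _ => Nat.sub_le_sub_right (hfy j) _) hy
  -- the candidate Möbius function on Q
  set g : Q → Q → ℤ := fun x y => ∏ j ∈ Finset.range K, fcoef (y.1 j - x.1 j) with hgdef
  set D : Q → Q → Finset Q := fun x y => Finset.univ.filter (fun t : Q => x ≤ t ∧ t ≤ y) with hDdef
  have hmemD : ∀ x y t : Q, t ∈ D x y ↔ (x ≤ t ∧ t ≤ y) := by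
    intro x y t; simp [hDdef]
  -- sum of g over an interval is a delta
  have hginv : ∀ x y : Q, x ≤ y → ∑ t ∈ D x y, g x t = if x = y then 1 else 0 := by
    intro x y hxy
    by_cases hxy' : x = y
    · subst hxy'
      rw [if_pos rfl]
      have hD1 : D x x = {x} := by
        ext t
        rw [hmemD]
        simp only [Finset.mem_singleton]
        constructor
        · rintro ⟨h1, h2⟩; exact le_antisymm h2 h1
        · rintro rfl; exact ⟨le_refl t, le_refl t⟩
      rw [hD1, Finset.sum_singleton]
      simp only [hgdef]
      rw [Finset.prod_congr rfl (fun j _ => by rw [Nat.sub_self, fcoef_zero]), Finset.prod_const_one]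
    · rw [if_neg hxy']
      have hex : ∃ j0, x.1 j0 < y.1 j0 := by
        by_contra h
        push_neg at h
        exact hxy' (le_antisymm hxy ((hQle y x).mpr fun j => h j))
      obtain ⟨j0, hj0⟩ := hex
      have hj0K : j0 < K := by
        by_contra h
        push_neg at h
        rw [hvan y j0 h] at hj0
        omega
      set v : Q → ℕ := fun t => if t.1 j0 = x.1 j0 then x.1 j0 + 1
        else if t.1 j0 = x.1 j0 + 1 then x.1 j0 else t.1 j0 with hvdef
      have hxle : ∀ t : Q, x ≤ t → ∀ j, x.1 j ≤ Function.update t.1 j0 (v t) j := by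
        intro t hxt j
        have hxtj := (hQle x t).mp hxt j0
        rcases eq_or_ne j j0 with rfl | hne
        · rw [Function.update_self]
          simp only [hvdef]
          split_ifs <;> omega
        · rw [Function.update_of_ne hne]
          exact (hQle x t).mp hxt j
      have hyle : ∀ t : Q, x ≤ t → t ≤ y → ∀ j, Function.update t.1 j0 (v t) j ≤ y.1 j := by
        intro t hxt hty j
        have htyj := (hQle t y).mp hty j0
        rcases eq_or_ne j j0 with rfl | hne
        · rw [Function.update_self]
          simp only [hvdef]
          split_ifs <;> omega
        · rw [Function.update_of_ne hne]
          exact (hQle t y).mp hty j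
      -- product splitting
      have hsplit : ∀ (t : Q) (w : ℕ),
          (∏ j ∈ Finset.range K, fcoef (Function.update t.1 j0 w j - x.1 j))
            = fcoef (w - x.1 j0) * ∏ j ∈ (Finset.range K).erase j0, fcoef (t.1 j - x.1 j) := by
        intro t w
        have hfun : (fun j => fcoef (Function.update t.1 j0 w j - x.1 j))
            = Function.update (fun j => fcoef (t.1 j - x.1 j)) j0 (fcoef (w - x.1 j0)) := by
          funext j
          rcases eq_or_ne j j0 with rfl | hne
          · rw [Function.update_self, Function.update_self]
          · rw [Function.update_of_ne hne, Function.update_of_ne hne]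
        rw [hfun, Finset.prod_update_of_mem (Finset.mem_range.mpr hj0K), ← Finset.erase_eq]
      have hgsplit : ∀ t : Q, g x t
          = fcoef (t.1 j0 - x.1 j0) * ∏ j ∈ (Finset.range K).erase j0, fcoef (t.1 j - x.1 j) := by
        intro t
        simp only [hgdef]
        exact (Finset.mul_prod_erase (Finset.range K) _ (Finset.mem_range.mpr hj0K)).symm
      have hgupd : ∀ (t : Q) (w : ℕ)
          (hw : IsPartition (Function.update t.1 j0 w) ∧ IsHStrip lam (Function.update t.1 j0 w) ∧
            stripSize lam (Function.update t.1 j0 w) ≤ a),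
          g x ⟨Function.update t.1 j0 w, hw⟩
            = fcoef (w - x.1 j0) * ∏ j ∈ (Finset.range K).erase j0, fcoef (t.1 j - x.1 j) := by
        intro t w hw
        simp only [hgdef]
        exact hsplit t w
      refine Finset.sum_involution
        (fun t ht => (⟨Function.update t.1 j0 (v t),
          hbetween x y _ (hxle t ((hmemD x y t).mp ht).1)
            (hyle t ((hmemD x y t).mp ht).1 ((hmemD x y t).mp ht).2)⟩ : Q))
        ?_ ?_ ?_ ?_
      · -- sums to zero
        intro t ht
        have hxtj := (hQle x t).mp ((hmemD x y t).mp ht).1 j0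
        show g x t + g x _ = 0
        rw [hgsplit t, hgupd t (v t)]
        by_cases h1 : t.1 j0 = x.1 j0
        · have hv1 : v t = x.1 j0 + 1 := by simp [hvdef, h1]
          rw [h1, hv1, Nat.sub_self, fcoef_zero, show x.1 j0 + 1 - x.1 j0 = 1 by omega, fcoef_one]
          ring
        · by_cases h2 : t.1 j0 = x.1 j0 + 1
          · have hv1 : v t = x.1 j0 := by simp [hvdef, h1, h2]
            rw [h2, hv1, Nat.sub_self, fcoef_zero, show x.1 j0 + 1 - x.1 j0 = 1 by omega, fcoef_one]
            ring
          · have hv1 : v t = t.1 j0 := by simp [hvdef, h1, h2]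
            rw [hv1, fcoef_of_two_le (by omega)]
            ring
      · -- nontrivial when g ≠ 0
        intro t ht hne heq
        have hval := congrFun (congrArg Subtype.val heq) j0
        simp only [Function.update_self] at hval
        have hxtj := (hQle x t).mp ((hmemD x y t).mp ht).1 j0
        simp only [hvdef] at hval
        split_ifs at hval with h1 h2
        · omega
        · omega
        · apply hne
          rw [hgsplit t, fcoef_of_two_le (by omega), zero_mul]
      · -- membership
        intro t ht
        exact (hmemD x y _).mpr ⟨(hQle _ _).mpr (hxle t ((hmemD x y t).mp ht).1),
          (hQle _ _).mpr (hyle t ((hmemD x y t).mp ht).1 ((hmemD x y t).mp ht).2)⟩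
      · -- involutive
        intro t ht
        have hxtj := (hQle x t).mp ((hmemD x y t).mp ht).1 j0
        have hvv : ∀ s : Q, s.1 j0 = v t → v s = t.1 j0 := by
          intro s hs
          simp only [hvdef] at hs ⊢
          by_cases h1 : t.1 j0 = x.1 j0
          · rw [if_pos h1] at hs
            rw [hs, if_neg (by omega), if_pos rfl, h1]
          · by_cases h2 : t.1 j0 = x.1 j0 + 1
            · rw [if_neg h1, if_pos h2] at hs
              rw [hs, if_pos rfl, h2]
            · rw [if_neg h1, if_neg h2] at hs
              rw [hs, if_neg h1, if_neg h2]
        apply Subtype.ext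
        funext j
        rcases eq_or_ne j j0 with rfl | hne
        · simp only [Function.update_self]
          exact hvv _ (Function.update_self _ _ _)
        · simp [Function.update_of_ne hne]
  -- mu equals g on Q
  have hbody : ∀ y x : Q, x ≤ y → (∀ t : Q, x ≤ t → t ≤ y → t ≠ y → mu ↑x ↑t = g x t) →
      mu ↑x ↑y = g x y := by
    intro y x hxy ih
    have h0 := hmu ↑x ↑y (WithTop.coe_le_coe.mpr hxy)
    rw [hIcc x y, finsum_mem_coe_finset,
      Finset.sum_image (fun t _ s _ h => WithTop.coe_injective h)] at h0
    have hyD : y ∈ D x y := (hmemD x y y).mpr ⟨hxy, le_refl y⟩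
    simp only [hDdef] at hyD
    rw [← Finset.add_sum_erase _ _ hyD] at h0
    have herase : ∑ t ∈ (Finset.univ.filter (fun t : Q => x ≤ t ∧ t ≤ y)).erase y, mu ↑x ↑t
        = ∑ t ∈ (Finset.univ.filter (fun t : Q => x ≤ t ∧ t ≤ y)).erase y, g x t := by
      apply Finset.sum_congr rfl
      intro t ht
      have h1 := (Finset.mem_filter.mp (Finset.mem_of_mem_erase ht)).2
      have h2 := Finset.ne_of_mem_erase ht
      exact ih t h1.1 h1.2 h2
    have h3 := hginv x y hxy
    simp only [hDdef] at h3
    rw [← Finset.add_sum_erase _ _ hyD] at h3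
    have hifeq : (if (↑x : WithTop Q) = ↑y then (1:ℤ) else 0) = if x = y then 1 else 0 := by
      by_cases h : x = y
      · simp [h]
      · rw [if_neg h, if_neg (fun hc => h (WithTop.coe_injective hc))]
    rw [hifeq, herase] at h0
    omega
  have hmug : ∀ n (y x : Q), x ≤ y → (∑ j ∈ Finset.range K, (y.1 j - x.1 j)) ≤ n →
      mu ↑x ↑y = g x y := by
    intro n
    induction n with
    | zero =>
        intro y x hxy hn
        have hxy0 : x = y := by
          apply Subtype.ext; funext j
          rcases lt_or_ge j K with hj | hj
          · have h1 := Finset.sum_eq_zero_iff.mp (Nat.le_zero.mp hn) j (Finset.mem_range.mpr hj)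
            have h2 := (hQle x y).mp hxy j
            omega
          · rw [hvan x j hj, hvan y j hj]
        apply hbody y x hxy
        intro t hxt hty htne
        exact absurd (le_antisymm hty (hxy0 ▸ hxt)) htne
    | succ n ih =>
        intro y x hxy hn
        apply hbody y x hxy
        intro t hxt hty htne
        apply ih t x hxt
        have hlt : ∑ j ∈ Finset.range K, (t.1 j - x.1 j)
            < ∑ j ∈ Finset.range K, (y.1 j - x.1 j) := by
          have hexj : ∃ j0, t.1 j0 < y.1 j0 := by
            by_contra h; push_neg at h
            exact htne (le_antisymm hty ((hQle y t).mpr h))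
          obtain ⟨j0, hj0⟩ := hexj
          have hj0K : j0 < K := by
            by_contra h; push_neg at h; rw [hvan y j0 h] at hj0; omega
          apply Finset.sum_lt_sum
          · intro j _
            have := (hQle t y).mp hty j
            omega
          · exact ⟨j0, Finset.mem_range.mpr hj0K, by
              have h1 := (hQle x t).mp hxt j0
              have h2 := (hQle t y).mp hty j0
              omega⟩
        omega
  -- the top interval
  have hmtop := hmu (↑m) ⊤ le_top
  have hIccTop : (Set.Icc (↑m) (⊤ : WithTop Q))
      = ↑(insert (⊤ : WithTop Q)
          ((Finset.univ.filter (fun t : Q => m ≤ t)).image (fun t : Q => (↑t : WithTop Q)))) := by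
    ext z
    simp only [Set.mem_Icc, le_top, and_true, Finset.coe_insert, Set.mem_insert_iff,
      Finset.coe_image, Finset.coe_filter, Finset.mem_univ, true_and, Set.mem_image,
      Set.mem_setOf_eq]
    rcases z with _ | t
    · constructor
      · intro _; exact Or.inl rfl
      · intro _; exact le_top
    · constructor
      · intro h; exact Or.inr ⟨t, WithTop.coe_le_coe.mp h, rfl⟩
      · rintro (h | ⟨s, hs, hst⟩)
        · exact absurd h (by simp)
        · rw [← hst]; exact WithTop.coe_le_coe.mpr hs
  rw [hIccTop, finsum_mem_coe_finset, Finset.sum_insert (by simp),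
    Finset.sum_image (fun t _ s _ h => WithTop.coe_injective h), if_neg (by simp)] at hmtop
  have hrepl : ∀ t ∈ Finset.univ.filter (fun t : Q => m ≤ t), mu ↑m ↑t = g m t := by
    intro t ht
    exact hmug (∑ j ∈ Finset.range K, (t.1 j - m.1 j)) t m (Finset.mem_filter.mp ht).2 le_rfl
  rw [Finset.sum_congr rfl hrepl] at hmtop
  -- combinatorial bookkeeping
  have hsm := m.2.2.2
  set b := a - stripSize lam m.1 with hbdef
  set Rfin := (Finset.range K).filter (fun i => m.1 (i+1) < lam i) with hRdef
  set S := insert 0 (Rfin.image (· + 1)) with hSdef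
  have hrbar : stripRowsBar lam m.1 = Rfin.card := by
    have hset : {i | m.1 (i+1) < lam i} = ↑Rfin := by
      ext i
      simp only [Set.mem_setOf_eq, hRdef, Finset.coe_filter, Finset.mem_range, Finset.mem_coe,
        Finset.mem_filter]
      constructor
      · intro hi
        refine ⟨?_, hi⟩
        by_contra hc
        push_neg at hc
        rw [hlamK i hc] at hi
        omega
      · exact fun h => h.2
    rw [stripRowsBar, hset, Set.ncard_coe_finset]
  have hSK : ∀ j ∈ S, j < K := by
    intro j hj
    simp only [hSdef, Finset.mem_insert, Finset.mem_image] at hj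
    rcases hj with rfl | ⟨i, hi, rfl⟩
    · exact hKpos
    · simp only [hRdef, Finset.mem_filter, Finset.mem_range] at hi
      have h1 : lam i ≠ 0 := by omega
      have h2 : i < N := by
        by_contra hc; push_neg at hc; exact h1 (hN i hc)
      omega
  have h0S : (0:ℕ) ∉ Rfin.image (· + 1) := by simp
  have hScard : S.card = Rfin.card + 1 := by
    rw [hSdef, Finset.card_insert_of_notMem h0S,
      Finset.card_image_of_injective _ (add_left_injective 1)]
  have h0mem : (0:ℕ) ∈ S := by simp [hSdef]
  have hSmem2 : ∀ i, (i + 1 ∈ S ↔ (i < K ∧ m.1 (i+1) < lam i)) := by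
    intro i
    simp only [hSdef, Finset.mem_insert, Finset.mem_image, hRdef, Finset.mem_filter,
      Finset.mem_range]
    constructor
    · rintro (h | ⟨i', ⟨hi1, hi2⟩, he⟩)
      · omega
      · have : i' = i := by omega
        subst this
        exact ⟨hi1, hi2⟩
    · intro h; exact Or.inr ⟨i, ⟨h.1, h.2⟩, rfl⟩
  -- size additivity on 0/1 perturbations
  have hmono2 : ∀ t : Q, m ≤ t → (∀ j, t.1 j ≤ m.1 j + 1) →
      stripSize lam t.1 = stripSize lam m.1 +
        ((Finset.range K).filter (fun j => t.1 j ≠ m.1 j)).card := by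
    intro t hmt hp
    rw [hsizeEq t, hsizeEq m, Finset.card_filter, ← Finset.sum_add_distrib]
    apply Finset.sum_congr rfl
    intro j _
    have h1 := (hQle m t).mp hmt j
    have h2 := hp j
    have h3 := m.2.2.1.1 j
    split_ifs with h <;> omega
  -- construction of Q-elements from subsets
  have hmkQ : ∀ T : Finset ℕ, T ⊆ S → T.card ≤ b →
      IsPartition (fun j => m.1 j + (if j ∈ T then 1 else 0)) ∧
      IsHStrip lam (fun j => m.1 j + (if j ∈ T then 1 else 0)) ∧
      stripSize lam (fun j => m.1 j + (if j ∈ T then 1 else 0)) ≤ a := by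
    intro T hTS hTb
    have hTK : ∀ j ∈ T, j < K := fun j hj => hSK j (hTS hj)
    have hstep : ∀ i, i + 1 ∈ T → m.1 (i+1) < lam i := by
      intro i hi
      exact ((hSmem2 i).mp (hTS hi)).2
    have hvT : ∀ j, K ≤ j → (fun j => m.1 j + (if j ∈ T then 1 else 0)) j = 0 := by
      intro j hj
      have h1 : j ∉ T := fun hc => absurd (hTK j hc) (by omega)
      simp only [if_neg h1]
      rw [hvan m j hj]
    refine ⟨⟨fun i => ?_, K, hvT⟩, ⟨fun i => ?_, fun i => ?_⟩, ?_⟩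
    · show m.1 (i+1) + (if i+1 ∈ T then 1 else 0) ≤ m.1 i + (if i ∈ T then 1 else 0)
      have h3 := m.2.2.1.1 i
      have h4 := m.2.1.1 i
      split_ifs with h1 h2 h2 <;>
        first
        | omega
        | (have h5 := hstep i h1; omega)
    · show lam i ≤ m.1 i + (if i ∈ T then 1 else 0)
      have := m.2.2.1.1 i
      split_ifs <;> omega
    · show m.1 (i+1) + (if i+1 ∈ T then 1 else 0) ≤ lam i
      have h1 := m.2.2.1.2 i
      split_ifs with h2
      · have := hstep i h2; omega
      · omega
    · rw [hsizeEq' _ hvT]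
      have hsplit2 : ∀ j ∈ Finset.range K, (m.1 j + (if j ∈ T then 1 else 0) - lam j)
          = (m.1 j - lam j) + (if j ∈ T then 1 else 0) := by
        intro j _
        have := m.2.2.1.1 j
        split_ifs <;> omega
      rw [Finset.sum_congr rfl hsplit2, Finset.sum_add_distrib, ← hsizeEq m]
      have hTsum : (∑ j ∈ Finset.range K, if j ∈ T then 1 else 0) = T.card := by
        rw [Finset.sum_ite_mem,
          Finset.inter_eq_right.mpr (fun j hj => Finset.mem_range.mpr (hTK j hj)),
          Finset.sum_const, smul_eq_mul, mul_one]
      rw [hTsum]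
      omega
  -- restriction to 0/1 perturbations
  have hfil : ∑ t ∈ Finset.univ.filter (fun t : Q => m ≤ t), g m t
      = ∑ t ∈ (Finset.univ.filter (fun t : Q => m ≤ t)).filter
          (fun t => ∀ j, t.1 j ≤ m.1 j + 1), g m t := by
    refine (Finset.sum_filter_of_ne ?_).symm
    intro t ht hne
    by_contra hc
    push_neg at hc
    obtain ⟨j, hj⟩ := hc
    have hjK : j < K := by
      by_contra h; push_neg at h; rw [hvan t j h] at hj; omega
    apply hne
    simp only [hgdef]
    exact Finset.prod_eq_zero (Finset.mem_range.mpr hjK) (fcoef_of_two_le (by omega))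
  -- value of g on 0/1 perturbations
  have hgval : ∀ t : Q, m ≤ t → (∀ j, t.1 j ≤ m.1 j + 1) →
      g m t = (-1:ℤ)^((Finset.range K).filter (fun j => t.1 j ≠ m.1 j)).card := by
    intro t hmt hp
    simp only [hgdef]
    have hcong : ∏ j ∈ Finset.range K, fcoef (t.1 j - m.1 j)
        = ∏ j ∈ Finset.range K, (if t.1 j ≠ m.1 j then (-1:ℤ) else 1) := by
      apply Finset.prod_congr rfl
      intro j hj
      have h1 := (hQle m t).mp hmt j
      have h2 := hp j
      split_ifs with h
      · have h3 : t.1 j - m.1 j = 1 := by omega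
        rw [h3, fcoef_one]
      · have h3 : t.1 j - m.1 j = 0 := by omega
        rw [h3, fcoef_zero]
    rw [hcong, Finset.prod_ite, Finset.prod_const, Finset.prod_const, one_pow, mul_one]
  have himem : ∀ t : Q, m ≤ t → (∀ j, t.1 j ≤ m.1 j + 1) →
      ((Finset.range K).filter (fun j => t.1 j ≠ m.1 j)) ⊆ S ∧
      ((Finset.range K).filter (fun j => t.1 j ≠ m.1 j)).card ≤ b := by
    intro t hmt hp
    constructor
    · intro j hj
      simp only [Finset.mem_filter, Finset.mem_range] at hj
      obtain ⟨hjK, hne⟩ := hj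
      have h1 := (hQle m t).mp hmt j
      have h2 := hp j
      have h3 : t.1 j = m.1 j + 1 := by omega
      rcases j with _ | i
      · exact h0mem
      · apply (hSmem2 i).mpr
        refine ⟨by omega, ?_⟩
        have h4 := t.2.2.1.2 i
        omega
    · have h5 := hmono2 t hmt hp
      have h6 := t.2.2.2
      omega
  -- the bijection with subsets of S
  have hbij : ∑ t ∈ (Finset.univ.filter (fun t : Q => m ≤ t)).filter
        (fun t => ∀ j, t.1 j ≤ m.1 j + 1), g m t
      = ∑ T ∈ S.powerset.filter (fun T => T.card ≤ b), (-1:ℤ)^T.card := by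
    apply Finset.sum_nbij'
      (i := fun t : Q => (Finset.range K).filter (fun j => t.1 j ≠ m.1 j))
      (j := fun T : Finset ℕ =>
        if hT : T ⊆ S ∧ T.card ≤ b then
          (⟨fun j => m.1 j + (if j ∈ T then 1 else 0), hmkQ T hT.1 hT.2⟩ : Q)
        else m)
    · intro t ht
      simp only [Finset.mem_filter, Finset.mem_univ, true_and] at ht
      have h := himem t ht.1 ht.2
      simp only [Finset.mem_filter, Finset.mem_powerset]
      exact h
    · intro T hT
      simp only [Finset.mem_filter, Finset.mem_powerset] at hT
      rw [dif_pos hT]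
      simp only [Finset.mem_filter, Finset.mem_univ, true_and]
      constructor
      · exact (hQle m _).mpr fun j => Nat.le_add_right _ _
      · intro j
        show m.1 j + (if j ∈ T then 1 else 0) ≤ m.1 j + 1
        split_ifs <;> omega
    · intro t ht
      simp only [Finset.mem_filter, Finset.mem_univ, true_and] at ht
      have h := himem t ht.1 ht.2
      rw [dif_pos h]
      apply Subtype.ext
      funext j
      show m.1 j + (if j ∈ (Finset.range K).filter (fun j => t.1 j ≠ m.1 j) then 1 else 0)
        = t.1 j
      have h1 := (hQle m t).mp ht.1 j
      have h2 := ht.2 j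
      by_cases hj : j < K
      · by_cases hne : t.1 j = m.1 j
        · have hnm : j ∉ (Finset.range K).filter (fun j => t.1 j ≠ m.1 j) := by
            simp only [Finset.mem_filter, Finset.mem_range, not_and, not_not]
            intro _; exact hne
          rw [if_neg hnm]
          omega
        · rw [if_pos (Finset.mem_filter.mpr ⟨Finset.mem_range.mpr hj, hne⟩)]
          omega
      · have hnm : j ∉ (Finset.range K).filter (fun j => t.1 j ≠ m.1 j) := by
          simp only [Finset.mem_filter, Finset.mem_range]
          exact fun hc => hj hc.1
        rw [if_neg hnm]
        have hv1 := hvan t j (by omega)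
        have hv2 := hvan m j (by omega)
        omega
    · intro T hT
      simp only [Finset.mem_filter, Finset.mem_powerset] at hT
      rw [dif_pos hT]
      ext j
      simp only [Finset.mem_filter, Finset.mem_range]
      constructor
      · rintro ⟨hjK, hne⟩
        by_contra hc
        exact hne (by simp [hc])
      · intro hj
        refine ⟨hSK j (hT.1 hj), by simp [hj]⟩
    · intro t ht
      simp only [Finset.mem_filter, Finset.mem_univ, true_and] at ht
      exact hgval t ht.1 ht.2
  have hfinal : ∑ t ∈ Finset.univ.filter (fun t : Q => m ≤ t), g m t
      = (-1:ℤ)^b * ((Rfin.card).choose b) := by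
    rw [hfil, hbij, sum_powerset_filter_card_le, hScard, alt_sum_choose]
  rw [hfinal] at hmtop
  rw [hrbar]
  linarith [hmtop]
end

section
/- Let t ∈ ℕ, let b : Fin (t+1) → ℕ, and let a ∈ ℕ. Then ∑_{c} [∑_i c i ≥ a] · (−1)^{(∑_i c i) − a} · C((∑_i [c i > 0]) − 1, (∑_i c i) − a) = [∑_i b i ≥ a], where the sum ranges over all c : Fin (t+1) → ℕ with c i ≤ b i for every i, the first argument of C is the integer (∑_i [c i > 0]) − 1 ∈ ℤ (which may equal −1), and C(q,k) for q ∈ ℤ, k ∈ ℕ is the generalized binomial coefficient q(q−1)⋯(q−k+1)/k!. -/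
/-- The summand, as a function of the total sum `s` and number of positive parts `k`. -/
def mbsF (a s k : ℕ) : ℤ :=
  if a ≤ s then (-1 : ℤ) ^ (s - a) * Ring.choose ((k : ℤ) - 1) (s - a) else 0

lemma Ring.choose_neg_one (m : ℕ) : Ring.choose (-1 : ℤ) m = (-1 : ℤ) ^ m := by
  have : (-1 : ℤ) - m + 1 = -m := by ring
  rw [Ring.choose, this, Ring.multichoose_neg_self]

lemma mbsF_zero (a s : ℕ) : mbsF a s 0 = if a ≤ s then 1 else 0 := by
  unfold mbsF
  split
  · rw [show ((0:ℕ):ℤ) - 1 = -1 by norm_num, Ring.choose_neg_one, ← mul_pow]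
    norm_num
  · rfl

lemma mbsF_pascal (a s k : ℕ) : mbsF a (s + 1) k = mbsF a s k + mbsF a (s + 1) (k + 1) := by
  unfold mbsF
  rcases le_or_gt a s with h | h
  · have h1 : a ≤ s + 1 := le_trans h (by omega)
    have h2 : s + 1 - a = (s - a) + 1 := by omega
    simp only [if_pos h, if_pos h1, h2]
    have hp := Ring.choose_succ_succ ((k : ℤ) - 1) (s - a)
    have hk : (k : ℤ) - 1 + 1 = ((k : ℕ) + 1 : ℕ) - 1 := by push_cast; ring
    rw [hk] at hp
    rw [hp]
    ring
  · rcases Nat.lt_or_ge s (a - 1) with h' | h'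
    · have h1 : ¬ a ≤ s + 1 := by omega
      simp [if_neg (by omega : ¬ a ≤ s), if_neg h1]
    · have ha : a = s + 1 := by omega
      have h1 : a ≤ s + 1 := by omega
      simp only [if_pos h1, if_neg (by omega : ¬ a ≤ s)]
      have : s + 1 - a = 0 := by omega
      simp [this]

lemma mbsF_one_var (a s k B : ℕ) :
    ∑ v ∈ Finset.range (B + 1), mbsF a (s + v) (k + if 0 < v then 1 else 0)
      = mbsF a (s + B) k := by
  induction B with
  | zero => simp
  | succ B ih =>
    rw [Finset.sum_range_succ, ih, if_pos (Nat.succ_pos B), ← add_assoc,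
      ← mbsF_pascal a (s + B) k]

lemma sum_piFinset_succ {M : Type*} [AddCommMonoid M] (n : ℕ)
    (s : Fin (n + 1) → Finset ℕ) (g : (Fin (n + 1) → ℕ) → M) :
    ∑ c ∈ Fintype.piFinset s, g c
      = ∑ v ∈ s 0, ∑ c ∈ Fintype.piFinset (fun i => s i.succ), g (Fin.cons v c) := by
  rw [← Finset.sum_product']
  refine Finset.sum_nbij' (fun c => (c 0, Fin.tail c)) (fun p => Fin.cons p.1 p.2)
    ?_ ?_ ?_ ?_ ?_
  · intro c hc
    simp only [Fintype.mem_piFinset] at hc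
    simp only [Finset.mem_product, Fintype.mem_piFinset]
    exact ⟨hc 0, fun i => hc i.succ⟩
  · intro p hp
    simp only [Finset.mem_product, Fintype.mem_piFinset] at hp
    simp only [Fintype.mem_piFinset]
    intro i
    refine Fin.cases ?_ ?_ i
    · simpa using hp.1
    · intro j; simpa using hp.2 j
  · intro c _; exact Fin.cons_self_tail c
  · intro p _; simp
  · intro c _; rw [Fin.cons_self_tail]

lemma mbsF_multi (a : ℕ) : ∀ (t : ℕ) (b : Fin (t + 1) → ℕ) (s k : ℕ),
    ∑ c ∈ Fintype.piFinset (fun i => Finset.range (b i + 1)),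
      mbsF a (s + ∑ i, c i) (k + ∑ i, if 0 < c i then 1 else 0)
      = mbsF a (s + ∑ i, b i) k := by
  intro t
  induction t with
  | zero =>
    intro b s k
    rw [sum_piFinset_succ 0 (fun i => Finset.range (b i + 1))]
    simp only [Fin.sum_univ_succ, Fin.cons_zero, Fin.cons_succ, Finset.univ_eq_empty,
      Finset.sum_empty, add_zero, Fintype.piFinset_of_isEmpty, Finset.sum_const,
      Finset.card_univ, Fintype.card_unique, one_smul]
    simpa using mbsF_one_var a s k (b 0)
  | succ t ih =>
    intro b s k
    rw [sum_piFinset_succ (t + 1) (fun i => Finset.range (b i + 1))]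
    have inner : ∀ v : ℕ,
        ∑ c ∈ Fintype.piFinset (fun i : Fin (t + 1) => Finset.range (b i.succ + 1)),
          mbsF a (s + ∑ i : Fin (t + 2), (Fin.cons v c : Fin (t + 2) → ℕ) i)
            (k + ∑ i : Fin (t + 2), if 0 < (Fin.cons v c : Fin (t + 2) → ℕ) i then 1 else 0)
        = mbsF a ((s + v) + ∑ i : Fin (t + 1), b i.succ) (k + if 0 < v then 1 else 0) := by
      intro v
      rw [← ih (fun i => b i.succ) (s + v) (k + if 0 < v then 1 else 0)]
      refine Finset.sum_congr rfl fun c _ => ?_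
      simp only [Fin.sum_univ_succ, Fin.cons_zero, Fin.cons_succ]
      ring_nf
    calc ∑ v ∈ Finset.range (b 0 + 1), ∑ c ∈ Fintype.piFinset
            (fun i : Fin (t + 1) => Finset.range (b i.succ + 1)),
          mbsF a (s + ∑ i : Fin (t + 2), (Fin.cons v c : Fin (t + 2) → ℕ) i)
            (k + ∑ i : Fin (t + 2), if 0 < (Fin.cons v c : Fin (t + 2) → ℕ) i then 1 else 0)
        = ∑ v ∈ Finset.range (b 0 + 1),
            mbsF a ((s + ∑ i : Fin (t + 1), b i.succ) + v) (k + if 0 < v then 1 else 0) := by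
          refine Finset.sum_congr rfl fun v _ => ?_
          rw [inner v]
          congr 1
          omega
      _ = mbsF a (s + ∑ i, b i) k := by
          rw [mbsF_one_var a (s + ∑ i : Fin (t + 1), b i.succ) k (b 0)]
          rw [show (∑ i, b i) = b 0 + ∑ i : Fin (t + 1), b i.succ from Fin.sum_univ_succ b]
          congr 1
          omega

/-- Multi-index version of the binomial summation lemma used for `c^ν_{λ,(a)}`:
for `b : Fin (t+1) → ℕ` and `a : ℕ`,
`∑_{c ≤ b} [∑ c ≥ a] (−1)^{∑c − a} C((∑_i [c i > 0]) − 1, ∑c − a) = [∑ b ≥ a]`,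
where `C` is the generalized binomial coefficient on `ℤ` (the first argument may be `−1`). -/
theorem multi_binom_sum_ge (t : ℕ) (b : Fin (t + 1) → ℕ) (a : ℕ) :
    ∑ c ∈ Fintype.piFinset (fun i => Finset.range (b i + 1)),
      (if a ≤ ∑ i, c i then (1 : ℤ) else 0) * (-1 : ℤ) ^ (∑ i, c i - a) *
        Ring.choose ((∑ i, if 0 < c i then (1 : ℤ) else 0) - 1) (∑ i, c i - a)
    = if a ≤ ∑ i, b i then (1 : ℤ) else 0 := by
  have h := mbsF_multi a t b 0 0
  simp only [zero_add] at h
  rw [← mbsF_zero a (∑ i, b i), ← h]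
  refine Finset.sum_congr rfl fun c _ => ?_
  unfold mbsF
  have hk : ((∑ i, if 0 < c i then (1:ℕ) else 0 : ℕ) : ℤ)
      = ∑ i, if 0 < c i then (1 : ℤ) else 0 := by
    push_cast [Nat.cast_sum]
    exact Finset.sum_congr rfl fun i _ => by split <;> simp
  rw [← hk]
  split <;> simp [mul_comm]
end

section
/- Let t ∈ ℕ, let n, b : Fin (t+1) → ℕ with b i ≤ n i for every i, and let a ∈ ℕ with a < n 0. Then ∑_{c} [∑_i c i ≤ a] · (−1)^{a − ∑_i c i} · C(∑_{i ≠ 0} [c i < n i], a − ∑_i c i) = [∑_i b i ≤ a], where the sum ranges over all c : Fin (t+1) → ℕ with b i ≤ c i ≤ n i for every i, and C(m,k) denotes the ordinary binomial coefficient of natural numbers. -/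
set_option maxHeartbeats 1000000

/-- Multi-index version of the binomial summation lemma used for `d^ν_{λ,(a)}`:
for `n b : Fin (t+1) → ℕ` with `b ≤ n` pointwise and `a < n 0`,
`∑_{b ≤ c ≤ n} [∑c ≤ a] (−1)^{a − ∑c} C(∑_{i ≠ 0} [c i < n i], a − ∑c) = [∑ b ≤ a]`,
where `C` is the ordinary binomial coefficient of natural numbers. -/
theorem multi_binom_sum_le (t : ℕ) (n b : Fin (t + 1) → ℕ)
    (hbn : ∀ i, b i ≤ n i) (a : ℕ) (ha : a < n 0) :
    ∑ c ∈ Fintype.piFinset (fun i => Finset.Icc (b i) (n i)),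
      (if (∑ i, c i) ≤ a then (1 : ℤ) else 0) * (-1 : ℤ) ^ (a - ∑ i, c i) *
        (((∑ i ∈ Finset.univ.filter (fun i : Fin (t + 1) => i ≠ 0),
            if c i < n i then 1 else 0).choose (a - ∑ i, c i) : ℤ))
    = if (∑ i, b i) ≤ a then (1 : ℤ) else 0 := by
  classical
  set B := Fintype.piFinset (fun i => Finset.Icc (b i) (n i)) with hB
  have hcard : ∀ (S : Finset (Fin (t + 1))),
      (∑ i : Fin (t + 1), (if i ∈ S then 1 else 0)) = S.card := by
    intro S
    simp [Finset.sum_ite_mem]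
  -- Step 1: each summand is a signed count of subsets
  have h1 : ∀ c : Fin (t + 1) → ℕ,
      (if (∑ i, c i) ≤ a then (1 : ℤ) else 0) * (-1 : ℤ) ^ (a - ∑ i, c i) *
        (((∑ i ∈ Finset.univ.filter (fun i : Fin (t + 1) => i ≠ 0),
            if c i < n i then 1 else 0).choose (a - ∑ i, c i) : ℤ))
      = ∑ S ∈ (Finset.univ.filter (fun i : Fin (t + 1) => i ≠ 0 ∧ c i < n i)).powerset,
          (if (∑ i, c i) + S.card = a then (-1 : ℤ) ^ S.card else 0) := by
    intro c
    set T := Finset.univ.filter (fun i : Fin (t + 1) => i ≠ 0 ∧ c i < n i) with hT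
    have hm : (∑ i ∈ Finset.univ.filter (fun i : Fin (t + 1) => i ≠ 0),
        if c i < n i then 1 else 0) = T.card := by
      rw [hT, Finset.card_filter, Finset.sum_filter]
      exact Finset.sum_congr rfl fun i _ => by by_cases h0 : i = (0 : Fin (t + 1)) <;> simp [h0]
    by_cases h : (∑ i, c i) ≤ a
    · have step : ∀ S ∈ T.powerset,
          (if (∑ i, c i) + S.card = a then (-1 : ℤ) ^ S.card else 0)
          = if S.card = a - ∑ i, c i then (-1 : ℤ) ^ (a - ∑ i, c i) else 0 := by
        intro S _
        by_cases hS : (∑ i, c i) + S.card = a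
        · have h2 : S.card = a - ∑ i, c i := by omega
          rw [if_pos hS, if_pos h2, h2]
        · rw [if_neg hS, if_neg (by omega)]
      have hrhs : ∑ S ∈ T.powerset,
          (if S.card = a - ∑ i, c i then (-1 : ℤ) ^ (a - ∑ i, c i) else 0)
          = (T.card.choose (a - ∑ i, c i) : ℤ) * (-1 : ℤ) ^ (a - ∑ i, c i) := by
        rw [← Finset.sum_filter, Finset.sum_const, ← Finset.powersetCard_eq_filter,
          Finset.card_powersetCard, nsmul_eq_mul]
      rw [Finset.sum_congr rfl step, hrhs, if_pos h, hm]
      ring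
    · rw [if_neg h, zero_mul, zero_mul]
      refine (Finset.sum_eq_zero fun S _ => ?_).symm
      rw [if_neg (by omega)]
  calc
    ∑ c ∈ B,
      (if (∑ i, c i) ≤ a then (1 : ℤ) else 0) * (-1 : ℤ) ^ (a - ∑ i, c i) *
        (((∑ i ∈ Finset.univ.filter (fun i : Fin (t + 1) => i ≠ 0),
            if c i < n i then 1 else 0).choose (a - ∑ i, c i) : ℤ))
      = ∑ c ∈ B, ∑ S ∈ (Finset.univ.filter
            (fun i : Fin (t + 1) => i ≠ 0 ∧ c i < n i)).powerset,
          (if (∑ i, c i) + S.card = a then (-1 : ℤ) ^ S.card else 0) :=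
        Finset.sum_congr rfl fun c _ => h1 c
    _ = ∑ p ∈ B.sigma (fun c => (Finset.univ.filter
            (fun i : Fin (t + 1) => i ≠ 0 ∧ c i < n i)).powerset),
          (if (∑ i, p.1 i) + p.2.card = a then (-1 : ℤ) ^ p.2.card else 0) :=
        Finset.sum_sigma' _ _ _
    _ = ∑ p ∈ B.sigma (fun d => (Finset.univ.filter
            (fun i : Fin (t + 1) => i ≠ 0 ∧ b i < d i)).powerset),
          (if (∑ i, p.1 i) = a then (-1 : ℤ) ^ p.2.card else 0) := by
        refine Finset.sum_nbij'
          (fun p => ⟨fun j => p.1 j + if j ∈ p.2 then 1 else 0, p.2⟩)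
          (fun p => ⟨fun j => p.1 j - if j ∈ p.2 then 1 else 0, p.2⟩)
          ?_ ?_ ?_ ?_ ?_
        · rintro ⟨c, S⟩ hp
          rw [Finset.mem_sigma] at hp
          obtain ⟨hc, hS⟩ := hp
          rw [Fintype.mem_piFinset] at hc
          rw [Finset.mem_powerset] at hS
          dsimp only at hc hS ⊢
          rw [Finset.mem_sigma]
          constructor
          · rw [Fintype.mem_piFinset]
            intro i
            have h4 := Finset.mem_Icc.1 (hc i)
            rw [Finset.mem_Icc]
            by_cases hi : i ∈ S
            · have h2 := (Finset.mem_filter.1 (hS hi)).2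
              simp only [hi, if_pos]
              omega
            · simp only [hi, if_neg, not_false_iff]
              omega
          · rw [Finset.mem_powerset]
            intro i hi
            have h2 := (Finset.mem_filter.1 (hS hi)).2
            have h3 := (Finset.mem_Icc.1 (hc i)).1
            refine Finset.mem_filter.2 ⟨Finset.mem_univ _, h2.1, ?_⟩
            simp only [hi, if_pos]
            omega
        · rintro ⟨d, S⟩ hp
          rw [Finset.mem_sigma] at hp
          obtain ⟨hd, hS⟩ := hp
          rw [Fintype.mem_piFinset] at hd
          rw [Finset.mem_powerset] at hS
          dsimp only at hd hS ⊢
          rw [Finset.mem_sigma]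
          constructor
          · rw [Fintype.mem_piFinset]
            intro i
            have h4 := Finset.mem_Icc.1 (hd i)
            rw [Finset.mem_Icc]
            by_cases hi : i ∈ S
            · have h2 := (Finset.mem_filter.1 (hS hi)).2
              simp only [hi, if_pos]
              omega
            · simp only [hi, if_neg, not_false_iff]
              omega
          · rw [Finset.mem_powerset]
            intro i hi
            have h2 := (Finset.mem_filter.1 (hS hi)).2
            have h3 := (Finset.mem_Icc.1 (hd i)).2
            refine Finset.mem_filter.2 ⟨Finset.mem_univ _, h2.1, ?_⟩
            simp only [hi, if_pos]
            omega
        · rintro ⟨c, S⟩ _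
          refine Sigma.ext ?_ (by simp)
          dsimp only
          funext j
          by_cases hj : j ∈ S <;> simp [hj]
        · rintro ⟨d, S⟩ hp
          rw [Finset.mem_sigma] at hp
          obtain ⟨_, hS⟩ := hp
          rw [Finset.mem_powerset] at hS
          dsimp only at hS
          refine Sigma.ext ?_ (by simp)
          dsimp only
          funext j
          by_cases hj : j ∈ S
          · have h2 := (Finset.mem_filter.1 (hS hj)).2
            simp only [hj, if_pos]
            omega
          · simp [hj]
        · rintro ⟨c, S⟩ _
          have hsum : (∑ i, (c i + if i ∈ S then 1 else 0)) = (∑ i, c i) + S.card := by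
            rw [Finset.sum_add_distrib, hcard]
          dsimp only
          rw [hsum]
    _ = ∑ d ∈ B, ∑ S ∈ (Finset.univ.filter
            (fun i : Fin (t + 1) => i ≠ 0 ∧ b i < d i)).powerset,
          (if (∑ i, d i) = a then (-1 : ℤ) ^ S.card else 0) := by
        rw [Finset.sum_sigma']
    _ = ∑ d ∈ B, (if (∑ i, d i) = a ∧
          (Finset.univ.filter (fun i : Fin (t + 1) => i ≠ 0 ∧ b i < d i)) = ∅
          then (1 : ℤ) else 0) := by
        refine Finset.sum_congr rfl fun d _ => ?_
        by_cases hd : (∑ i, d i) = a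
        · simp only [hd, if_pos rfl, true_and]
          exact Finset.sum_powerset_neg_one_pow_card
        · simp [hd]
    _ = if (∑ i, b i) ≤ a then (1 : ℤ) else 0 := by
        have hsplit : ∀ f : Fin (t + 1) → ℕ,
            (∑ i, f i) = f 0 + ∑ i ∈ Finset.univ.erase 0, f i := by
          intro f
          rw [← Finset.add_sum_erase Finset.univ f (Finset.mem_univ (0 : Fin (t + 1)))]
        by_cases hba : (∑ i, b i) ≤ a
        · rw [if_pos hba]
          set s' := ∑ i ∈ Finset.univ.erase (0 : Fin (t + 1)), b i with hs'
          have hbs : (∑ i, b i) = b 0 + s' := hsplit b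
          set dstar : Fin (t + 1) → ℕ := fun i => if i = 0 then a - s' else b i with hdstar
          have hdmem : dstar ∈ B := by
            rw [hB, Fintype.mem_piFinset]
            intro i
            rw [Finset.mem_Icc]
            by_cases hi : i = 0
            · subst hi
              simp only [hdstar, if_pos rfl]
              omega
            · simp only [hdstar, if_neg hi]
              exact ⟨le_refl _, hbn i⟩
          have hdsum : (∑ i, dstar i) = a := by
            rw [hsplit dstar]
            have : ∑ i ∈ Finset.univ.erase (0 : Fin (t + 1)), dstar i = s' := by
              refine Finset.sum_congr rfl fun i hi => ?_
              have := Finset.ne_of_mem_erase hi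
              simp [hdstar, this]
            rw [this]
            simp only [hdstar, if_pos rfl]
            omega
          have hU : (Finset.univ.filter
              (fun i : Fin (t + 1) => i ≠ 0 ∧ b i < dstar i)) = ∅ := by
            rw [Finset.filter_eq_empty_iff]
            rintro i - ⟨hi0, hlt⟩
            simp [hdstar, hi0] at hlt
          have hzero : ∀ x ∈ B, x ≠ dstar →
              (if (∑ i, x i) = a ∧ (Finset.univ.filter
                (fun i : Fin (t + 1) => i ≠ 0 ∧ b i < x i)) = ∅
               then (1 : ℤ) else 0) = 0 := by
            intro x hx hne
            rw [hB] at hx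
            rw [Fintype.mem_piFinset] at hx
            rw [if_neg]
            rintro ⟨hxa, hxU⟩
            rw [Finset.filter_eq_empty_iff] at hxU
            apply hne
            have hxb : ∀ i : Fin (t + 1), i ≠ 0 → x i = b i := by
              intro i hi
              have h1 := hxU (Finset.mem_univ i)
              have h2 := (Finset.mem_Icc.1 (hx i)).1
              push_neg at h1
              have := h1 hi
              omega
            have hxe : ∑ i ∈ Finset.univ.erase (0 : Fin (t + 1)), x i = s' :=
              Finset.sum_congr rfl fun i hi => hxb i (Finset.ne_of_mem_erase hi)
            have hx0 : x 0 = a - s' := by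
              have := hsplit x
              omega
            funext i
            by_cases hi : i = 0
            · subst hi; simp [hdstar, hx0]
            · simp [hdstar, hi, hxb i hi]
          rw [Finset.sum_eq_single_of_mem dstar hdmem hzero, if_pos ⟨hdsum, hU⟩]
        · rw [if_neg hba]
          refine Finset.sum_eq_zero fun d hd => ?_
          rw [hB] at hd
          rw [Fintype.mem_piFinset] at hd
          rw [if_neg]
          rintro ⟨hda, hdU⟩
          rw [Finset.filter_eq_empty_iff] at hdU
          have hdb : ∀ i : Fin (t + 1), b i ≤ d i := fun i =>
            (Finset.mem_Icc.1 (hd i)).1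
          have hdb2 : ∀ i : Fin (t + 1), i ≠ 0 → d i ≤ b i := by
            intro i hi
            have h1 := hdU (Finset.mem_univ i)
            push_neg at h1
            exact h1 hi
          have hle : (∑ i, b i) ≤ ∑ i, d i := Finset.sum_le_sum fun i _ => hdb i
          omega
end
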